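/- arXiv:2403.06383 — 6 statements merged into one kernel-verified Lean document; each statement's English description precedes it below -/
import Mathlib

section
/- The spectral radius of the graph 2K_1 + C_{n-2} (the join of two isolated vertices with a cycle on n-2 vertices) equals √(2n-3) + 1, for n ≥ 5. -/
open SimpleGraph Filter

set_option linter.unusedVariables false

/-- The join of two graphs: disjoint union plus all edges between the two vertex sets. -/
def gjoin {α β : Type*} (G : SimpleGraph α) (H : SimpleGraph β) : SimpleGraph (α ⊕ β) where
  Adj x y :=
    match x, y with
    | Sum.inl a, Sum.inl b => G.Adj a b
    | Sum.inr a, Sum.inr b => H.Adj a b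
    | _, _ => True
  symm := ⟨by rintro (a|a) (b|b) h <;> simp_all <;> exact h.symm⟩
  loopless := ⟨by rintro (a|a) h <;> exact (by simp at h : False)⟩

lemma adjMatrix_isHermitian {V : Type*} [Fintype V] (G : SimpleGraph V)
    [DecidableRel G.Adj] : (G.adjMatrix ℝ).IsHermitian := by
  ext i j
  simp [Matrix.conjTranspose, SimpleGraph.adjMatrix, Matrix.transpose, SimpleGraph.adj_comm]

/-- The spectral radius of a finite graph: the largest eigenvalue of its adjacency matrix. -/
noncomputable def specRad {V : Type*} [Fintype V] [DecidableEq V] (G : SimpleGraph V) : ℝ :=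
  letI := Classical.decRel G.Adj
  ⨆ i, (adjMatrix_isHermitian G).eigenvalues i

/-- `G` contains a copy of `H` (a subgraph isomorphic to `H`). -/
def ContainsCopy {α β : Type*} (H : SimpleGraph α) (G : SimpleGraph β) : Prop :=
  ∃ f : H →g G, Function.Injective f

/-- A linear forest: an acyclic graph with maximum degree at most 2,
i.e. a disjoint union of paths (and isolated vertices). -/
def IsLinearForest {V : Type*} (G : SimpleGraph V) : Prop :=
  G.IsAcyclic ∧ ∀ v, (G.neighborSet v).ncard ≤ 2

/-- The graph on `m` vertices consisting of `⌊m/2⌋` disjoint edges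
(plus one isolated vertex if `m` is odd). -/
def matchingGraph (m : ℕ) : SimpleGraph (Fin m) where
  Adj i j := i ≠ j ∧ (i : ℕ) / 2 = (j : ℕ) / 2
  symm := ⟨fun i j h => ⟨h.1.symm, h.2.symm⟩⟩
  loopless := ⟨fun i h => h.1 rfl⟩

/-- `H` is a minor of `G`, witnessed by connected, pairwise disjoint branch sets. -/
def HasMinor {α β : Type*} (G : SimpleGraph α) (H : SimpleGraph β) : Prop :=
  ∃ f : β → Set α,
    (∀ w, (f w).Nonempty) ∧
    (∀ w, ((G.induce (f w)).Connected)) ∧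
    (Pairwise fun w₁ w₂ => Disjoint (f w₁) (f w₂)) ∧
    (∀ w₁ w₂, H.Adj w₁ w₂ → ∃ u ∈ f w₁, ∃ v ∈ f w₂, G.Adj u v)

/-- A graph is planar iff it has no `K₅`-minor and no `K₃,₃`-minor (Wagner's theorem). -/
def IsPlanar {α : Type*} (G : SimpleGraph α) : Prop :=
  ¬ HasMinor G (completeGraph (Fin 5)) ∧
    ¬ HasMinor G (completeBipartiteGraph (Fin 3) (Fin 3))

/-- The maximum number of edges of an `n`-vertex `H`-free linear forest. -/
noncomputable def exF {m : ℕ} (n : ℕ) (H : SimpleGraph (Fin m)) : ℕ :=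
  sSup {e | ∃ G : SimpleGraph (Fin n),
    IsLinearForest G ∧ ¬ ContainsCopy H G ∧ G.edgeSet.ncard = e}

/-- The disjoint union of paths `P_{k-1}` on `n` vertices (consecutive vertices in each
block of `k-1` are joined). -/
def unionOfPaths (k n : ℕ) : SimpleGraph (Fin n) where
  Adj i j := ((i : ℕ) + 1 = j ∨ (j : ℕ) + 1 = i) ∧ (i : ℕ) / (k - 1) = (j : ℕ) / (k - 1)
  symm := ⟨fun i j h => ⟨h.1.symm, h.2.symm⟩⟩
  loopless := ⟨fun i h => by omega⟩


open Matrix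

lemma perron {V : Type*} [Fintype V] [DecidableEq V] [Nonempty V] (G : SimpleGraph V)
    [DecidableRel G.Adj] (v : V → ℝ) (hv : ∀ i, 0 < v i) (r : ℝ) (hr : 0 ≤ r)
    (h : G.adjMatrix ℝ *ᵥ v = r • v) (hA : (G.adjMatrix ℝ).IsHermitian) :
    (⨆ i, hA.eigenvalues i) = r := by
  set A := G.adjMatrix ℝ with hAdef
  have hAnn : ∀ i j, 0 ≤ A i j := fun i j => by
    simp only [hAdef, SimpleGraph.adjMatrix_apply]
    split <;> norm_num
  have hAsymm : Aᵀ = A := hA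
  -- upper bound
  have hub : ∀ i, hA.eigenvalues i ≤ r := by
    intro i
    set μ := hA.eigenvalues i with hμ
    rcases le_or_gt μ 0 with hμ0 | hμ0
    · linarith
    set x : V → ℝ := ⇑(hA.eigenvectorBasis i) with hx
    have hxe : A *ᵥ x = μ • x := hA.mulVec_eigenvectorBasis i
    have hxne : ∃ j, x j ≠ 0 := by
      by_contra hc
      push_neg at hc
      have : hA.eigenvectorBasis i = 0 := by
        ext j; exact hc j
      exact hA.eigenvectorBasis.orthonormal.ne_zero i this
    set y : V → ℝ := fun j => |x j| with hy
    have key : ∀ j, μ * y j ≤ (A *ᵥ y) j := by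
      intro j
      have h1 : μ * y j = |(A *ᵥ x) j| := by
        rw [hxe]
        simp only [Pi.smul_apply, smul_eq_mul, abs_mul, abs_of_pos hμ0]
        rfl
      rw [h1]
      calc |(A *ᵥ x) j| ≤ ∑ k, |A j k * x k| := by
            apply Finset.abs_sum_le_sum_abs
        _ = (A *ᵥ y) j := by
            apply Finset.sum_congr rfl
            intro k _
            rw [abs_mul, abs_of_nonneg (hAnn j k)]
    have hsum : μ * (v ⬝ᵥ y) ≤ r * (v ⬝ᵥ y) := by
      have h1 : μ * (v ⬝ᵥ y) ≤ v ⬝ᵥ (A *ᵥ y) := by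
        simp only [dotProduct]
        rw [Finset.mul_sum]
        apply Finset.sum_le_sum
        intro j _
        calc μ * (v j * y j) = v j * (μ * y j) := by ring
          _ ≤ v j * (A *ᵥ y) j := by
              exact mul_le_mul_of_nonneg_left (key j) (hv j).le
      have h2 : v ⬝ᵥ (A *ᵥ y) = r * (v ⬝ᵥ y) := by
        rw [Matrix.dotProduct_mulVec, ← hAsymm, Matrix.vecMul_transpose, h,
          smul_dotProduct, smul_eq_mul]
      linarith [h1, h2.ge, h2.le]
    have hpos : 0 < v ⬝ᵥ y := by
      obtain ⟨j, hj⟩ := hxne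
      apply Finset.sum_pos' (fun k _ => mul_nonneg (hv k).le (abs_nonneg _))
      exact ⟨j, Finset.mem_univ j, mul_pos (hv j) (abs_pos.mpr hj)⟩
    exact le_of_mul_le_mul_right (by linarith) hpos
  -- attainment
  have hat : ∃ i, hA.eigenvalues i = r := by
    have hvne : (WithLp.equiv 2 (V → ℝ)).symm v ≠ 0 := by
      intro hc
      have := congrFun (congrArg (WithLp.equiv 2 (V → ℝ)) hc) (Classical.arbitrary V)
      simp at this
      exact (hv _).ne' this
    obtain ⟨i, hi⟩ : ∃ i, (inner (𝕜 := ℝ) (hA.eigenvectorBasis i) ((WithLp.equiv 2 (V → ℝ)).symm v)) ≠ 0 := by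
      by_contra hc
      push_neg at hc
      have := hA.eigenvectorBasis.sum_repr ((WithLp.equiv 2 (V → ℝ)).symm v)
      rw [show (∑ i, hA.eigenvectorBasis.repr ((WithLp.equiv 2 (V → ℝ)).symm v) i • hA.eigenvectorBasis i) = 0 from ?_] at this
      · exact hvne this.symm
      · apply Finset.sum_eq_zero
        intro i _
        rw [hA.eigenvectorBasis.repr_apply_apply, hc i, zero_smul]
    set x : V → ℝ := ⇑(hA.eigenvectorBasis i) with hx
    have hxe : A *ᵥ x = hA.eigenvalues i • x := hA.mulVec_eigenvectorBasis i
    have hinner : (inner (𝕜 := ℝ) (hA.eigenvectorBasis i) ((WithLp.equiv 2 (V → ℝ)).symm v)) = x ⬝ᵥ v := by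
      rw [PiLp.inner_apply]
      rw [dotProduct]; apply Finset.sum_congr rfl; intro j _; simp [hx, mul_comm]
    have e1 : x ⬝ᵥ (A *ᵥ v) = r * (x ⬝ᵥ v) := by
      rw [h, dotProduct_smul, smul_eq_mul]
    have e2 : x ⬝ᵥ (A *ᵥ v) = hA.eigenvalues i * (x ⬝ᵥ v) := by
      rw [Matrix.dotProduct_mulVec, ← Matrix.mulVec_transpose, hAsymm, hxe,
        smul_dotProduct, smul_eq_mul]
    refine ⟨i, ?_⟩
    have := e1.symm.trans e2
    have hc : x ⬝ᵥ v ≠ 0 := by rwa [hinner] at hi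
    exact (mul_right_cancel₀ hc this).symm
  obtain ⟨i₀, hi₀⟩ := hat
  apply le_antisymm
  · exact ciSup_le hub
  · rw [← hi₀]
    exact le_ciSup (Set.Finite.bddAbove (Set.finite_range _)) i₀

/-- The spectral radius of `2K₁ + C_{n-2}` equals `√(2n-3) + 1` for `n ≥ 5`. -/
theorem spectral_radius_2K1_join_cycle (n : ℕ) (hn : 5 ≤ n) :
    specRad (gjoin (⊥ : SimpleGraph (Fin 2)) (cycleGraph (n - 2))) =
      Real.sqrt (2 * (n : ℝ) - 3) + 1 := by
  obtain ⟨k, rfl⟩ : ∃ k, n = k + 5 := ⟨n - 5, by omega⟩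
  show specRad (gjoin (⊥ : SimpleGraph (Fin 2)) (cycleGraph (k + 3))) = _
  set G := gjoin (⊥ : SimpleGraph (Fin 2)) (cycleGraph (k + 3)) with hG
  letI : DecidableRel G.Adj := Classical.decRel G.Adj
  set r : ℝ := Real.sqrt (2 * ((k + 5 : ℕ) : ℝ) - 3) + 1 with hrdef
  have hk7 : (0:ℝ) ≤ 2 * ((k + 5 : ℕ) : ℝ) - 3 := by push_cast; linarith
  have hs : Real.sqrt (2 * ((k + 5 : ℕ) : ℝ) - 3) ^ 2 = 2 * ((k + 5 : ℕ) : ℝ) - 3 :=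
    Real.sq_sqrt hk7
  have hsnn : 0 ≤ Real.sqrt (2 * ((k + 5 : ℕ) : ℝ) - 3) := Real.sqrt_nonneg _
  set v : Fin 2 ⊕ Fin (k + 3) → ℝ := Sum.elim (fun _ => ((k : ℝ) + 3)) (fun _ => r) with hvdef
  have hv : ∀ i, 0 < v i := by
    rintro (i | j) <;> simp [hvdef, hrdef] <;> positivity
  have hr : 0 ≤ r := by rw [hrdef]; positivity
  have heig : G.adjMatrix ℝ *ᵥ v = r • v := by
    funext x
    simp only [Matrix.mulVec, dotProduct]
    rw [Fintype.sum_sum_type]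
    cases x with
    | inl i =>
      have h1 : ∀ a : Fin 2, G.adjMatrix ℝ (Sum.inl i) (Sum.inl a) = 0 := by
        intro a
        simp [hG, gjoin, SimpleGraph.adjMatrix_apply]
      have h2 : ∀ b : Fin (k+3), G.adjMatrix ℝ (Sum.inl i) (Sum.inr b) = 1 := by
        intro b
        simp [hG, gjoin, SimpleGraph.adjMatrix_apply]
      simp only [h1, h2, zero_mul, one_mul, Finset.sum_const_zero, zero_add,
        Finset.sum_const, Finset.card_univ, Fintype.card_fin, nsmul_eq_mul, hvdef,
        Sum.elim_inr, Sum.elim_inl, Pi.smul_apply, smul_eq_mul]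
      push_cast
      ring
    | inr j =>
      have h1 : ∀ a : Fin 2, G.adjMatrix ℝ (Sum.inr j) (Sum.inl a) = 1 := by
        intro a
        simp [hG, gjoin, SimpleGraph.adjMatrix_apply]
      have h2 : ∀ b : Fin (k+3), G.adjMatrix ℝ (Sum.inr j) (Sum.inr b)
          = if (cycleGraph (k+3)).Adj j b then 1 else 0 := by
        intro b
        simp only [hG, SimpleGraph.adjMatrix_apply]
        congr 1
      have hdeg : (∑ b : Fin (k+3), if (cycleGraph (k+3)).Adj j b then (1:ℝ) else 0) = 2 := by
        rw [Finset.sum_boole]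
        have : (Finset.univ.filter fun b => (cycleGraph (k+3)).Adj j b)
            = (cycleGraph (k+3)).neighborFinset j := by
          rw [SimpleGraph.neighborFinset_eq_filter]
        rw [this]
        rw [show ((cycleGraph (k+3)).neighborFinset j).card = (cycleGraph (k+3)).degree j from rfl]
        rw [SimpleGraph.cycleGraph_degree_three_le]
        norm_num
      simp only [h1, h2, one_mul, hvdef, Sum.elim_inl, Sum.elim_inr, Pi.smul_apply,
        smul_eq_mul, Finset.sum_const, Finset.card_univ, Fintype.card_fin, nsmul_eq_mul,
        ite_mul, zero_mul]
      rw [show (∑ b : Fin (k+3), if (cycleGraph (k+3)).Adj j b then r else 0)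
          = (∑ b : Fin (k+3), if (cycleGraph (k+3)).Adj j b then (1:ℝ) else 0) * r by
        rw [Finset.sum_mul]; apply Finset.sum_congr rfl; intro b _; split <;> ring]
      rw [hdeg, hrdef]
      push_cast at hs hsnn ⊢
      nlinarith [hs, hsnn]
  exact perron G v hv r hr heig (adjMatrix_isHermitian G)
end

section
/- The spectral radius of the graph K_2 + C_{n-2} (the join of an edge with a cycle on n-2 vertices) equals √(2n - 15/4) + 3/2, for n ≥ 5. -/
open SimpleGraph Filter

set_option linter.unusedVariables false

open Matrix in
lemma sup_eigen_eq_of_eigenvector {V : Type*} [Fintype V] [DecidableEq V] [Nonempty V]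
    (G : SimpleGraph V) [DecidableRel G.Adj] (r : ℝ) (y : V → ℝ)
    (hy : ∀ v, 0 < y v) (heig : G.adjMatrix ℝ *ᵥ y = r • y) :
    (⨆ i, (adjMatrix_isHermitian G).eigenvalues i) = r := by
  have heigy : ∀ v, (∑ u ∈ G.neighborFinset v, y u) = r * y v := by
    intro v
    have := congrFun heig v
    rwa [SimpleGraph.adjMatrix_mulVec_apply] at this
  have upper : ∀ i, (adjMatrix_isHermitian G).eigenvalues i ≤ r := by
    intro i
    set hA := adjMatrix_isHermitian G with hAdef
    have hxe : G.adjMatrix ℝ *ᵥ ⇑(hA.eigenvectorBasis i) =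
        hA.eigenvalues i • ⇑(hA.eigenvectorBasis i) := hA.mulVec_eigenvectorBasis i
    set x : V → ℝ := ⇑(hA.eigenvectorBasis i) with hxdef
    have hx0 : x ≠ 0 := fun h => hA.eigenvectorBasis.orthonormal.ne_zero i (by ext v; simpa using congrFun h v)
    obtain ⟨v0, -, hv0⟩ := Finset.exists_max_image Finset.univ (fun v => |x v| / y v)
      Finset.univ_nonempty
    set c := |x v0| / y v0 with hc
    have hcle : ∀ u, |x u| ≤ c * y u := by
      intro u
      have h1 := hv0 u (Finset.mem_univ u)
      calc |x u| = (|x u| / y u) * y u := (div_mul_cancel₀ _ (hy u).ne').symm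
        _ ≤ c * y u := mul_le_mul_of_nonneg_right h1 (hy u).le
    have hcpos : 0 < c := by
      obtain ⟨u, hu⟩ := Function.ne_iff.mp hx0
      exact lt_of_lt_of_le (div_pos (abs_pos.mpr hu) (hy u)) (hv0 u (Finset.mem_univ u))
    have hxv0 : |x v0| = c * y v0 := (div_mul_cancel₀ _ (hy v0).ne').symm
    have hxpos : 0 < |x v0| := hxv0 ▸ mul_pos hcpos (hy v0)
    have e1 : hA.eigenvalues i * x v0 = ∑ u ∈ G.neighborFinset v0, x u := by
      have := congrFun hxe v0
      rw [SimpleGraph.adjMatrix_mulVec_apply] at this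
      simpa using this.symm
    have h1 : |hA.eigenvalues i| * |x v0| ≤ r * |x v0| := by
      calc |hA.eigenvalues i| * |x v0| = |hA.eigenvalues i * x v0| := (abs_mul _ _).symm
        _ = |∑ u ∈ G.neighborFinset v0, x u| := by rw [e1]
        _ ≤ ∑ u ∈ G.neighborFinset v0, |x u| := Finset.abs_sum_le_sum_abs _ _
        _ ≤ ∑ u ∈ G.neighborFinset v0, c * y u := Finset.sum_le_sum fun u _ => hcle u
        _ = c * ∑ u ∈ G.neighborFinset v0, y u := by rw [Finset.mul_sum]
        _ = c * (r * y v0) := by rw [heigy]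
        _ = r * (c * y v0) := by ring
        _ = r * |x v0| := by rw [hxv0]
    calc hA.eigenvalues i ≤ |hA.eigenvalues i| := le_abs_self _
      _ ≤ r := le_of_mul_le_mul_right h1 hxpos
  have lower : ∃ i, (adjMatrix_isHermitian G).eigenvalues i = r := by
    set hA := adjMatrix_isHermitian G with hAdef
    set yE : EuclideanSpace ℝ V := WithLp.toLp 2 y with hyE
    have hrep : hA.eigenvectorBasis.repr yE ≠ 0 := by
      intro h0
      have hy0 : yE = 0 := by
        have := congrArg hA.eigenvectorBasis.repr.symm h0
        simpa using this
      have := congrFun (congrArg (fun (z : EuclideanSpace ℝ V) => (z : V → ℝ)) hy0)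
        (Classical.arbitrary V)
      exact absurd this (ne_of_gt (hy _))
    obtain ⟨i, hi⟩ : ∃ i, hA.eigenvectorBasis.repr yE i ≠ 0 := by
      by_contra hc; push_neg at hc; exact hrep (by ext j; simpa using hc j)
    refine ⟨i, ?_⟩
    have hdot : hA.eigenvectorBasis.repr yE i
        = dotProduct (⇑(hA.eigenvectorBasis i)) y := by
      rw [OrthonormalBasis.repr_apply_apply]
      simp [PiLp.inner_apply, RCLike.inner_apply, dotProduct, hyE, mul_comm]
    set e : V → ℝ := ⇑(hA.eigenvectorBasis i) with hedef
    have hxe : G.adjMatrix ℝ *ᵥ e = hA.eigenvalues i • e := hA.mulVec_eigenvectorBasis i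
    have key : hA.eigenvalues i * dotProduct e y = r * dotProduct e y := by
      calc hA.eigenvalues i * dotProduct e y
          = dotProduct (hA.eigenvalues i • e) y := by rw [smul_dotProduct]; rfl
        _ = dotProduct (G.adjMatrix ℝ *ᵥ e) y := by rw [hxe]
        _ = dotProduct ((G.adjMatrix ℝ)ᵀ *ᵥ e) y := by rw [(G.isSymm_adjMatrix).eq]
        _ = dotProduct e (G.adjMatrix ℝ *ᵥ y) := by
            rw [Matrix.mulVec_transpose, ← Matrix.dotProduct_mulVec]
        _ = dotProduct e (r • y) := by rw [heig]
        _ = r * dotProduct e y := by rw [dotProduct_smul]; rfl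
    have hd0 : dotProduct e y ≠ 0 := by rwa [← hdot]
    exact mul_right_cancel₀ hd0 key
  refine le_antisymm (ciSup_le upper) ?_
  obtain ⟨i, hi⟩ := lower
  calc r = (adjMatrix_isHermitian G).eigenvalues i := hi.symm
    _ ≤ ⨆ j, (adjMatrix_isHermitian G).eigenvalues j :=
      le_ciSup (Set.Finite.bddAbove (Set.finite_range _)) i

open Matrix in
lemma specRad_gjoin_aux (m n : ℕ) (h : (m:ℝ) + 5 = n) :
    specRad (gjoin (completeGraph (Fin 2)) (cycleGraph (m+3)))
      = Real.sqrt (2*(n:ℝ) - 15/4) + 3/2 := by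
  have hm0 : (0:ℝ) ≤ (m:ℝ) := Nat.cast_nonneg m
  have hnn : (0:ℝ) ≤ 2*(n:ℝ) - 15/4 := by linarith
  set s := Real.sqrt (2*(n:ℝ) - 15/4) with hs
  have hs2 : s^2 = 2*(n:ℝ) - 15/4 := Real.sq_sqrt hnn
  have hs0 : (5/2:ℝ) ≤ s := by
    rw [hs, show (5/2:ℝ) = Real.sqrt ((5/2)^2) from (Real.sqrt_sq (by norm_num)).symm]
    exact Real.sqrt_le_sqrt (by norm_num; linarith)
  set r := s + 3/2 with hr
  have hr4 : (4:ℝ) ≤ r := by rw [hr]; linarith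
  have hr2 : r^2 = 3*r + 2*(n:ℝ) - 6 := by rw [hr]; linear_combination hs2
  set G := gjoin (completeGraph (Fin 2)) (cycleGraph (m+3)) with hG
  letI : DecidableRel G.Adj := Classical.decRel G.Adj
  set y : (Fin 2 ⊕ Fin (m+3)) → ℝ := Sum.elim (fun _ => (r-2)/2) (fun _ => (1:ℝ)) with hy
  have hypos : ∀ v, 0 < y v := by
    rintro (i|i) <;> simp [hy] <;> linarith
  have heig : G.adjMatrix ℝ *ᵥ y = r • y := by
    have adj_ll : ∀ i j : Fin 2, G.Adj (Sum.inl i) (Sum.inl j) ↔ i ≠ j := fun _ _ => Iff.rfl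
    have adj_lr : ∀ (i : Fin 2) (j : Fin (m+3)), G.Adj (Sum.inl i) (Sum.inr j) :=
      fun _ _ => trivial
    have adj_rl : ∀ (j : Fin (m+3)) (i : Fin 2), G.Adj (Sum.inr j) (Sum.inl i) :=
      fun _ _ => trivial
    have adj_rr : ∀ c j, G.Adj (Sum.inr c) (Sum.inr j) ↔ (cycleGraph (m+3)).Adj c j :=
      fun _ _ => Iff.rfl
    funext v
    rw [SimpleGraph.adjMatrix_mulVec_apply, SimpleGraph.neighborFinset_eq_filter,
      Finset.sum_filter]
    cases v with
    | inl i =>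
      rw [Fintype.sum_sum_type]
      simp only [hy, Sum.elim_inl, Sum.elim_inr, Pi.smul_apply, smul_eq_mul]
      have e1 : (∑ j : Fin 2, if G.Adj (Sum.inl i) (Sum.inl j) then (r-2)/2 else 0)
          = (r-2)/2 := by
        simp only [adj_ll]
        fin_cases i <;> simp [Fin.sum_univ_two]
      have e2 : (∑ j : Fin (m+3), if G.Adj (Sum.inl i) (Sum.inr j) then (1:ℝ) else 0)
          = (m:ℝ)+3 := by
        simp only [if_pos (adj_lr i _)]
        simp [Finset.sum_const]
      rw [e1, e2]
      linear_combination (-1/2)*hr2 + h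
    | inr c =>
      rw [Fintype.sum_sum_type]
      simp only [hy, Sum.elim_inl, Sum.elim_inr, Pi.smul_apply, smul_eq_mul]
      have e1 : (∑ j : Fin 2, if G.Adj (Sum.inr c) (Sum.inl j) then (r-2)/2 else 0)
          = r - 2 := by
        simp only [if_pos (adj_rl c _)]
        simp [Fin.sum_univ_two]; ring
      have e2 : (∑ j : Fin (m+3), if G.Adj (Sum.inr c) (Sum.inr j) then (1:ℝ) else 0)
          = 2 := by
        simp only [adj_rr]
        have hdeg : (∑ j : Fin (m+3), if (cycleGraph (m+3)).Adj c j then (1:ℝ) else 0)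
            = ((cycleGraph (m+3)).degree c : ℝ) := by
          rw [SimpleGraph.degree, SimpleGraph.neighborFinset_eq_filter, Finset.sum_boole]
        rw [hdeg, SimpleGraph.cycleGraph_degree_three_le]
        norm_num
      rw [e1, e2]
      ring
  unfold specRad
  exact sup_eigen_eq_of_eigenvector G r y hypos heig

/-- The spectral radius of `K₂ + C_{n-2}` equals `√(2n - 15/4) + 3/2` for `n ≥ 5`. -/
theorem spectral_radius_K2_join_cycle (n : ℕ) (hn : 5 ≤ n) :
    specRad (gjoin (completeGraph (Fin 2)) (cycleGraph (n - 2))) =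
      Real.sqrt (2 * (n : ℝ) - 15 / 4) + 3 / 2 := by
  obtain ⟨m, rfl⟩ : ∃ m, n = m + 5 := ⟨n - 5, by omega⟩
  have key := specRad_gjoin_aux m (m + 5) (by push_cast; ring)
  exact key
end

section
/- If n is even, n ≥ 4, and H' is the linear forest on n-2 vertices consisting of (n-2)/2 disjoint edges, then the spectral radius of K_2 + H' equals √(2n-4) + 1. -/
open SimpleGraph Filter

set_option linter.unusedVariables false

section SpecAux
open Matrix

def pt {m : ℕ} (hme : Even m) (j : Fin m) : Fin m :=
  ⟨if (j : ℕ) % 2 = 0 then (j : ℕ) + 1 else (j : ℕ) - 1, by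
    obtain ⟨k, hk⟩ := hme; have := j.isLt; split <;> omega⟩

lemma pt_val {m : ℕ} (hme : Even m) (j : Fin m) :
    (pt hme j : ℕ) = if (j : ℕ) % 2 = 0 then (j : ℕ) + 1 else (j : ℕ) - 1 := rfl

lemma pt_invol {m : ℕ} (hme : Even m) : Function.Involutive (pt hme) := by
  intro j
  apply Fin.ext
  have h1 := pt_val hme j
  have h2 := pt_val hme (pt hme j)
  have := j.isLt
  obtain ⟨k, hk⟩ := hme
  split at h1 <;> split at h2 <;> omega

lemma matching_adj_iff {m : ℕ} (hme : Even m) (j j' : Fin m) :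
    (matchingGraph m).Adj j j' ↔ j' = pt hme j := by
  have h1 := pt_val hme j
  have := j.isLt; have := j'.isLt
  obtain ⟨k, hk⟩ := hme
  show (j ≠ j' ∧ (j : ℕ) / 2 = (j' : ℕ) / 2) ↔ j' = pt _ j
  constructor
  · rintro ⟨hne, hdiv⟩
    have hne' : (j : ℕ) ≠ (j' : ℕ) := fun h => hne (Fin.ext h)
    apply Fin.ext
    split at h1 <;> omega
  · rintro rfl
    refine ⟨fun h => ?_, ?_⟩
    · have := congrArg Fin.val h
      split at h1 <;> omega
    · split at h1 <;> omega

lemma gjoin_adj_ll {α β} (G : SimpleGraph α) (H : SimpleGraph β) (a b : α) :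
    (gjoin G H).Adj (Sum.inl a) (Sum.inl b) ↔ G.Adj a b := Iff.rfl
lemma gjoin_adj_lr {α β} (G : SimpleGraph α) (H : SimpleGraph β) (a : α) (b : β) :
    (gjoin G H).Adj (Sum.inl a) (Sum.inr b) ↔ True := Iff.rfl
lemma gjoin_adj_rl {α β} (G : SimpleGraph α) (H : SimpleGraph β) (a : β) (b : α) :
    (gjoin G H).Adj (Sum.inr a) (Sum.inl b) ↔ True := Iff.rfl
lemma gjoin_adj_rr {α β} (G : SimpleGraph α) (H : SimpleGraph β) (a b : β) :
    (gjoin G H).Adj (Sum.inr a) (Sum.inr b) ↔ H.Adj a b := Iff.rfl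

lemma mulVec_inl {m : ℕ} (hme : Even m)
    [inst : DecidableRel (gjoin (completeGraph (Fin 2)) (matchingGraph m)).Adj]
    (v : Fin 2 ⊕ Fin m → ℝ) (i : Fin 2) :
    ((gjoin (completeGraph (Fin 2)) (matchingGraph m)).adjMatrix ℝ *ᵥ v) (Sum.inl i)
      = v (Sum.inl 0) + v (Sum.inl 1) - v (Sum.inl i) + ∑ j, v (Sum.inr j) := by
  rw [show ((gjoin (completeGraph (Fin 2)) (matchingGraph m)).adjMatrix ℝ *ᵥ v) (Sum.inl i)
      = ∑ y, (if (gjoin (completeGraph (Fin 2)) (matchingGraph m)).Adj (Sum.inl i) y then (1:ℝ)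
          else 0) * v y from by
    simp [Matrix.mulVec, dotProduct, SimpleGraph.adjMatrix]]
  rw [Fintype.sum_sum_type]
  simp only [gjoin_adj_ll, gjoin_adj_lr, completeGraph_eq_top, SimpleGraph.top_adj, if_true,
    one_mul, Fin.sum_univ_two]
  fin_cases i <;> norm_num <;> ring

lemma mulVec_inr {m : ℕ} (hme : Even m)
    [inst : DecidableRel (gjoin (completeGraph (Fin 2)) (matchingGraph m)).Adj]
    (v : Fin 2 ⊕ Fin m → ℝ) (j : Fin m) :
    ((gjoin (completeGraph (Fin 2)) (matchingGraph m)).adjMatrix ℝ *ᵥ v) (Sum.inr j)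
      = v (Sum.inl 0) + v (Sum.inl 1) + v (Sum.inr (pt hme j)) := by
  rw [show ((gjoin (completeGraph (Fin 2)) (matchingGraph m)).adjMatrix ℝ *ᵥ v) (Sum.inr j)
      = ∑ y, (if (gjoin (completeGraph (Fin 2)) (matchingGraph m)).Adj (Sum.inr j) y then (1:ℝ)
          else 0) * v y from by
    simp [Matrix.mulVec, dotProduct, SimpleGraph.adjMatrix]]
  rw [Fintype.sum_sum_type]
  simp only [gjoin_adj_rl, gjoin_adj_rr, if_true, one_mul, Fin.sum_univ_two,
    matching_adj_iff hme, ite_mul, zero_mul]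
  rw [Finset.sum_ite_eq' Finset.univ (pt hme j) (fun y => v (Sum.inr y))]
  simp [add_assoc]

lemma eig_le {m : ℕ} (hm2 : 2 ≤ m) (hme : Even m)
    [inst : DecidableRel (gjoin (completeGraph (Fin 2)) (matchingGraph m)).Adj]
    (μ : ℝ) (v : Fin 2 ⊕ Fin m → ℝ) (hv : v ≠ 0)
    (h : (gjoin (completeGraph (Fin 2)) (matchingGraph m)).adjMatrix ℝ *ᵥ v = μ • v) :
    μ ≤ Real.sqrt (2 * m) + 1 := by
  have hsq := Real.sqrt_nonneg (2 * (m:ℝ))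
  set s : ℝ := v (Sum.inl 0) + v (Sum.inl 1) with hs_def
  set T : ℝ := ∑ j, v (Sum.inr j) with hT_def
  have E : ∀ i : Fin 2, μ * v (Sum.inl i) = s - v (Sum.inl i) + T := by
    intro i
    have := congrFun h (Sum.inl i)
    rw [mulVec_inl hme] at this
    simp only [Pi.smul_apply, smul_eq_mul] at this
    linarith [this]
  have E3 : ∀ j : Fin m, μ * v (Sum.inr j) = s + v (Sum.inr (pt hme j)) := by
    intro j
    have := congrFun h (Sum.inr j)
    rw [mulVec_inr hme] at this
    simp only [Pi.smul_apply, smul_eq_mul] at this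
    linarith [this]
  have h1' : (μ - 1) * s = 2 * T := by
    have e0 := E 0; have e1 := E 1
    simp only [hs_def] at *
    nlinarith [e0, e1]
  have hptsum : ∑ j, v (Sum.inr (pt hme j)) = T := by
    rw [hT_def]
    exact Fintype.sum_bijective (pt hme) (pt_invol hme).bijective _ _ (fun j => rfl)
  have h2' : (μ - 1) * T = m * s := by
    have : ∑ j, μ * v (Sum.inr j) = ∑ j : Fin m, (s + v (Sum.inr (pt hme j))) :=
      Finset.sum_congr rfl (fun j _ => E3 j)
    rw [← Finset.mul_sum, ← hT_def, Finset.sum_add_distrib, hptsum, Finset.sum_const,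
      Finset.card_univ, Fintype.card_fin, nsmul_eq_mul] at this
    nlinarith [this]
  by_cases hs : s = 0
  · have hT : T = 0 := by rw [hs] at h1'; linarith
    by_cases h0 : v (Sum.inl 0) = 0
    · have h1v : v (Sum.inl 1) = 0 := by rw [hs_def] at hs; linarith
      obtain ⟨x, hx⟩ := Function.ne_iff.1 hv
      match x with
      | Sum.inl i =>
        exfalso; fin_cases i <;> simp_all
      | Sum.inr j =>
        have e1 := E3 j
        have e2 := E3 (pt hme j)
        rw [pt_invol hme j] at e2
        rw [hs] at e1 e2
        have hmu2 : μ * μ = 1 := by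
          have h4 : μ * (μ * v (Sum.inr j)) = v (Sum.inr j) := by rw [e1]; linarith [e2]
          have hxne : v (Sum.inr j) ≠ 0 := hx
          have h5 : (μ * μ - 1) * v (Sum.inr j) = 0 := by linear_combination h4
          rcases mul_eq_zero.1 h5 with h | h
          · linarith
          · exact absurd h hxne
        nlinarith [hmu2, hsq]
    · have e0 := E 0
      rw [hs, hT] at e0
      have : μ = -1 := by
        have : (μ + 1) * v (Sum.inl 0) = 0 := by linarith
        rcases mul_eq_zero.1 this with h | h
        · linarith
        · exact absurd h h0
      linarith
  · have hkey : (μ - 1) ^ 2 = 2 * m := by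
      have : (μ - 1) ^ 2 * s = (2 * m) * s := by
        linear_combination (μ - 1) * h1' + 2 * h2'
      exact mul_right_cancel₀ hs this
    have : μ - 1 ≤ Real.sqrt (2 * m) := by
      calc μ - 1 ≤ |μ - 1| := le_abs_self _
        _ = Real.sqrt ((μ - 1) ^ 2) := (Real.sqrt_sq_eq_abs _).symm
        _ = Real.sqrt (2 * m) := by rw [hkey]
    linarith

lemma key (m : ℕ) (hm2 : 2 ≤ m) (hme : Even m) :
    specRad (gjoin (completeGraph (Fin 2)) (matchingGraph m)) = Real.sqrt (2 * m) + 1 := by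
  letI inst : DecidableRel (gjoin (completeGraph (Fin 2)) (matchingGraph m)).Adj :=
    Classical.decRel _
  have hA := adjMatrix_isHermitian (gjoin (completeGraph (Fin 2)) (matchingGraph m))
  show (⨆ i, (adjMatrix_isHermitian
      (gjoin (completeGraph (Fin 2)) (matchingGraph m))).eigenvalues i) = _
  have hsq := Real.sqrt_nonneg (2 * (m : ℝ))
  have hc2 : Real.sqrt (2 * (m : ℝ)) ^ 2 = 2 * (m : ℝ) := Real.sq_sqrt (by positivity)
  set c := Real.sqrt (2 * (m : ℝ)) with hc
  set v₀ : Fin 2 ⊕ Fin m → ℝ := Sum.elim (fun _ => c) (fun _ => 2) with hv₀def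
  have hv₀ : (gjoin (completeGraph (Fin 2)) (matchingGraph m)).adjMatrix ℝ *ᵥ v₀
      = (c + 1) • v₀ := by
    funext x
    match x with
    | Sum.inl i =>
      rw [mulVec_inl hme]
      simp only [hv₀def, Sum.elim_inl, Sum.elim_inr, Pi.smul_apply, smul_eq_mul,
        Finset.sum_const, Finset.card_univ, Fintype.card_fin, nsmul_eq_mul]
      nlinarith [hc2]
    | Sum.inr j =>
      rw [mulVec_inr hme]
      simp only [hv₀def, Sum.elim_inl, Sum.elim_inr, Pi.smul_apply, smul_eq_mul]
      ring
  have hv₀ne : v₀ ≠ 0 := by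
    intro h0
    have h2 : (2 : ℝ) = 0 := congrFun h0 (Sum.inr ⟨0, by omega⟩)
    norm_num at h2
  have upper : ∀ i, (adjMatrix_isHermitian
      (gjoin (completeGraph (Fin 2)) (matchingGraph m))).eigenvalues i ≤ c + 1 := by
    intro i
    have hne : (⇑(hA.eigenvectorBasis i) : Fin 2 ⊕ Fin m → ℝ) ≠ 0 := by
      intro h0
      exact hA.eigenvectorBasis.orthonormal.ne_zero i (by simpa using congrArg (WithLp.toLp 2) h0)
    exact eig_le hm2 hme _ _ hne (hA.mulVec_eigenvectorBasis i)
  have hex : ∃ i, hA.eigenvalues i = c + 1 := by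
    by_contra hne
    push_neg at hne
    have horth : ∀ i, (⇑(hA.eigenvectorBasis i) : Fin 2 ⊕ Fin m → ℝ) ⬝ᵥ v₀ = 0 := by
      intro i
      set d : ℝ := (⇑(hA.eigenvectorBasis i) : Fin 2 ⊕ Fin m → ℝ) ⬝ᵥ v₀ with hd
      have e1 : (⇑(hA.eigenvectorBasis i) : Fin 2 ⊕ Fin m → ℝ) ⬝ᵥ
          ((gjoin (completeGraph (Fin 2)) (matchingGraph m)).adjMatrix ℝ *ᵥ v₀)
          = (c + 1) * ((⇑(hA.eigenvectorBasis i) : Fin 2 ⊕ Fin m → ℝ) ⬝ᵥ v₀) := by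
        rw [hv₀, dotProduct_smul, smul_eq_mul]
      have e2 : (⇑(hA.eigenvectorBasis i) : Fin 2 ⊕ Fin m → ℝ) ⬝ᵥ
          ((gjoin (completeGraph (Fin 2)) (matchingGraph m)).adjMatrix ℝ *ᵥ v₀)
          = hA.eigenvalues i * ((⇑(hA.eigenvectorBasis i) : Fin 2 ⊕ Fin m → ℝ) ⬝ᵥ v₀) := by
        rw [Matrix.dotProduct_mulVec, ← Matrix.mulVec_transpose,
          SimpleGraph.transpose_adjMatrix, hA.mulVec_eigenvectorBasis i,
          smul_dotProduct, smul_eq_mul]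
      have e12 : (c + 1) * d = hA.eigenvalues i * d := e1.symm.trans e2
      have h3 : (c + 1 - hA.eigenvalues i) * d = 0 := by linear_combination e12
      rcases mul_eq_zero.1 h3 with h | h
      · exact absurd (by linarith : hA.eigenvalues i = c + 1) (hne i)
      · exact h
    have hrepr : hA.eigenvectorBasis.repr
        (WithLp.toLp 2 v₀) = 0 := by
      ext i
      rw [OrthonormalBasis.repr_apply_apply]
      simpa [PiLp.inner_apply, RCLike.inner_apply, starRingEnd_apply, dotProduct, mul_comm]
        using horth i
    have hv0 : (WithLp.toLp 2 v₀) = 0 :=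
      hA.eigenvectorBasis.repr.map_eq_zero_iff.mp hrepr
    exact hv₀ne (by simpa using congrArg WithLp.ofLp hv0)
  obtain ⟨i₀, hi₀⟩ := hex
  apply le_antisymm
  · exact ciSup_le upper
  · rw [← hi₀]
    exact le_ciSup (Set.Finite.bddAbove (Set.finite_range _)) i₀

end SpecAux

/-- If `n` is even and `n ≥ 4`, the spectral radius of the join of `K₂` with a perfect
matching on `n-2` vertices equals `√(2n-4) + 1`. -/
theorem spectral_radius_K2_join_perfect_matching (n : ℕ) (hn : 4 ≤ n) (hev : Even n) :
    specRad (gjoin (completeGraph (Fin 2)) (matchingGraph (n - 2))) =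
      Real.sqrt (2 * (n : ℝ) - 4) + 1 := by
  have hm2 : 2 ≤ n - 2 := by omega
  have hme : Even (n - 2) := by obtain ⟨k, rfl⟩ := hev; exact ⟨k - 1, by omega⟩
  rw [key (n - 2) hm2 hme]
  have hcast : ((n - 2 : ℕ) : ℝ) = (n : ℝ) - 2 := by
    have h2 : (2:ℕ) ≤ n := by omega
    push_cast [Nat.cast_sub h2]
    ring
  rw [hcast]
  ring_nf
end

section
/- If n is odd, n ≥ 5, and H' is the linear forest on n-2 vertices consisting of (n-3)/2 disjoint edges plus one isolated vertex, then the spectral radius of K_2 + H' is strictly less than √(2n-4) + 1. -/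
open SimpleGraph Filter

set_option linter.unusedVariables false

section AuxSpectral

open Matrix

@[simp] lemma gjoin_adj_inl_inl {α β : Type*} (G : SimpleGraph α) (H : SimpleGraph β)
    (a b : α) : (gjoin G H).Adj (Sum.inl a) (Sum.inl b) ↔ G.Adj a b := Iff.rfl

@[simp] lemma gjoin_adj_inl_inr {α β : Type*} (G : SimpleGraph α) (H : SimpleGraph β)
    (a : α) (b : β) : (gjoin G H).Adj (Sum.inl a) (Sum.inr b) := trivial

@[simp] lemma gjoin_adj_inr_inl {α β : Type*} (G : SimpleGraph α) (H : SimpleGraph β)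
    (a : β) (b : α) : (gjoin G H).Adj (Sum.inr a) (Sum.inl b) := trivial

@[simp] lemma gjoin_adj_inr_inr {α β : Type*} (G : SimpleGraph α) (H : SimpleGraph β)
    (a b : β) : (gjoin G H).Adj (Sum.inr a) (Sum.inr b) ↔ H.Adj a b := Iff.rfl

lemma row_sum_bound {V : Type*} [Fintype V] [Nonempty V]
    (A : Matrix V V ℝ) (hA : ∀ i j, 0 ≤ A i j)
    (d : V → ℝ) (hd : ∀ u, 0 < d u) (t : ℝ)
    (hrow : ∀ u, ∑ j, A u j * d j < t * d u)
    (μ : ℝ) (v : V → ℝ) (hv : v ≠ 0) (heig : A *ᵥ v = μ • v) : μ < t := by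
  obtain ⟨u, -, hu⟩ := Finset.exists_max_image Finset.univ (fun w => |v w| / d w)
    ⟨Classical.arbitrary V, Finset.mem_univ _⟩
  have hu' : ∀ w, |v w| / d w ≤ |v u| / d u := fun w => hu w (Finset.mem_univ w)
  have hvu : 0 < |v u| := by
    obtain ⟨w, hw⟩ := Function.ne_iff.mp hv
    have h1 : 0 < |v w| / d w := div_pos (abs_pos.mpr hw) (hd w)
    have h2 : 0 < |v u| / d u := lt_of_lt_of_le h1 (hu' w)
    have h3 := mul_pos h2 (hd u)
    rwa [div_mul_cancel₀ _ (hd u).ne'] at h3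
  have hmv : (A *ᵥ v) u = μ * v u := by
    rw [heig]; simp
  have key : μ * |v u| < t * |v u| := by
    calc μ * |v u| ≤ |μ| * |v u| := mul_le_mul_of_nonneg_right (le_abs_self μ) (abs_nonneg _)
    _ = |μ * v u| := (abs_mul μ (v u)).symm
    _ = |∑ j, A u j * v j| := by rw [← hmv]; simp [Matrix.mulVec, dotProduct]
    _ ≤ ∑ j, |A u j * v j| := Finset.abs_sum_le_sum_abs _ _
    _ = ∑ j, A u j * |v j| := by
        refine Finset.sum_congr rfl fun j _ => ?_
        rw [abs_mul, abs_of_nonneg (hA u j)]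
    _ ≤ ∑ j, A u j * ((|v u| / d u) * d j) := by
        refine Finset.sum_le_sum fun j _ => ?_
        refine mul_le_mul_of_nonneg_left ?_ (hA u j)
        exact (div_le_iff₀ (hd j)).mp (hu' j)
    _ = (|v u| / d u) * ∑ j, A u j * d j := by
        rw [Finset.mul_sum]; exact Finset.sum_congr rfl fun j _ => by ring
    _ < (|v u| / d u) * (t * d u) := by
        exact mul_lt_mul_of_pos_left (hrow u) (div_pos hvu (hd u))
    _ = t * |v u| := by
        rw [mul_comm t (d u), ← mul_assoc, div_mul_cancel₀ _ (hd u).ne', mul_comm]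
  exact lt_of_mul_lt_mul_right (by simpa [mul_comm] using key) (abs_nonneg (v u))

lemma fin_sup_lt {ι : Type*} [Fintype ι] [Nonempty ι] (f : ι → ℝ) (t : ℝ)
    (h : ∀ i, f i < t) : (⨆ i, f i) < t := by
  obtain ⟨i, -, hi⟩ := Finset.exists_max_image Finset.univ f
    ⟨Classical.arbitrary ι, Finset.mem_univ _⟩
  exact lt_of_le_of_lt (ciSup_le fun j => hi j (Finset.mem_univ j)) (h i)

lemma specRad_lt_of_row_sums {V : Type*} [Fintype V] [DecidableEq V] [Nonempty V]
    (G : SimpleGraph V) (d : V → ℝ) (hd : ∀ u, 0 < d u) (t : ℝ)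
    (hrow : ∀ u, ∑ j, (@SimpleGraph.adjMatrix ℝ V G (Classical.decRel G.Adj) _ _) u j * d j
      < t * d u) :
    specRad G < t := by
  letI := Classical.decRel G.Adj
  unfold specRad
  apply fin_sup_lt
  intro i
  have hH := adjMatrix_isHermitian G
  exact row_sum_bound (G.adjMatrix ℝ)
    (fun i j => by by_cases h : G.Adj i j <;> simp [h])
    d hd t hrow _ _
    (by
      intro h
      exact hH.eigenvectorBasis.orthonormal.ne_zero i
        (by ext x; exact congrFun h x))
    (hH.mulVec_eigenvectorBasis i)

lemma sum_if_eq_aux (m i0 : ℕ) (h : i0 < m) (b c : ℝ) :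
    ∑ j : Fin m, (if (j : ℕ) = i0 then c else b) = ((m : ℝ) - 1) * b + c := by
  have h0 : ∀ j : Fin m, ((j : ℕ) = i0) = (j = (⟨i0, h⟩ : Fin m)) := fun j => by
    simp [Fin.ext_iff]
  simp_rw [h0]
  have h1 : ∀ j : Fin m, (if j = (⟨i0, h⟩ : Fin m) then c else b)
      = b + (if j = (⟨i0, h⟩ : Fin m) then c - b else 0) := fun j => by
    split <;> ring
  simp_rw [h1]
  rw [Finset.sum_add_distrib, Finset.sum_const, Finset.sum_ite_eq' Finset.univ _ (fun _ => c - b)]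
  simp [Finset.card_univ]
  ring

end AuxSpectral

/-- If `n` is odd and `n ≥ 5`, the spectral radius of the join of `K₂` with a near-perfect
matching on `n-2` vertices is strictly less than `√(2n-4) + 1`. -/
theorem spectral_radius_K2_join_near_perfect_matching (n : ℕ) (hn : 5 ≤ n) (hodd : Odd n) :
    specRad (gjoin (completeGraph (Fin 2)) (matchingGraph (n - 2))) <
      Real.sqrt (2 * (n : ℝ) - 4) + 1 := by
  classical
  have hmod : n % 2 = 1 := Nat.odd_iff.mp hodd
  set G : SimpleGraph (Fin 2 ⊕ Fin (n - 2)) :=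
    gjoin (completeGraph (Fin 2)) (matchingGraph (n - 2)) with hGdef
  set N : ℝ := (n : ℝ) with hN
  have hNn : (5 : ℝ) ≤ N := by rw [hN]; exact_mod_cast hn
  set s : ℝ := Real.sqrt (2 * N - 4) with hs
  have hs2 : s ^ 2 = 2 * N - 4 := Real.sq_sqrt (by linarith)
  have hs0 : 0 < s := Real.sqrt_pos.mpr (by linarith)
  have hs1 : (0 : ℝ) < s + 1 := by linarith
  have hn3 : (0 : ℝ) < N - 3 := by linarith
  set b : ℝ := 2 + 1 / (2 * (N - 3) * (s + 1)) with hb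
  set c : ℝ := 2 - 1 / (s + 1) with hc
  have hb2 : 2 < b := by
    rw [hb]
    have : 0 < 1 / (2 * (N - 3) * (s + 1)) := by positivity
    linarith
  have hc2 : c < 2 := by
    rw [hc]
    have : 0 < 1 / (s + 1) := by positivity
    linarith
  have hcpos : 0 < c := by
    rw [hc]
    have h1 : 1 / (s + 1) < 1 := by
      rw [div_lt_one hs1]; linarith
    linarith
  have hcb : c ≤ b := by linarith
  have hbpos : 0 < b := by linarith
  set d : Fin 2 ⊕ Fin (n - 2) → ℝ :=
    Sum.elim (fun _ => s) (fun j => if (j : ℕ) = n - 3 then c else b) with hd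
  have hdpos : ∀ u, 0 < d u := by
    rintro (a | j)
    · exact hs0
    · simp only [hd, Sum.elim_inr]
      split <;> assumption
  haveI : Nonempty (Fin 2 ⊕ Fin (n - 2)) := ⟨Sum.inl 0⟩
  apply specRad_lt_of_row_sums G d hdpos (s + 1)
  intro u
  have hsum2 : ∑ y : Fin (n - 2), d (Sum.inr y) = (N - 3) * b + c := by
    have h1 : ∑ y : Fin (n - 2), d (Sum.inr y)
        = ∑ y : Fin (n - 2), (if (y : ℕ) = n - 3 then c else b) := by
      simp [hd]
    rw [h1, sum_if_eq_aux (n - 2) (n - 3) (by omega) b c]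
    have : ((n - 2 : ℕ) : ℝ) = N - 2 := by
      rw [hN]; push_cast [show 2 ≤ n by omega]; ring
    rw [this]; ring
  rcases u with a | j
  · -- row of a K₂ vertex
    rw [Fintype.sum_sum_type]
    have h2 : ∑ y : Fin (n - 2),
        (@SimpleGraph.adjMatrix ℝ _ G (Classical.decRel G.Adj) _ _) (Sum.inl a) (Sum.inr y)
          * d (Sum.inr y) = (N - 3) * b + c := by
      rw [← hsum2]
      refine Finset.sum_congr rfl fun y _ => ?_
      simp [hGdef, SimpleGraph.adjMatrix]
    rw [h2]
    have h1 : ∑ x : Fin 2,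
        (@SimpleGraph.adjMatrix ℝ _ G (Classical.decRel G.Adj) _ _) (Sum.inl a) (Sum.inl x)
          * d (Sum.inl x) = s := by
      rw [Fin.sum_univ_two]
      fin_cases a <;>
        simp [hGdef, SimpleGraph.adjMatrix, hd, completeGraph, Fin.ext_iff]
    rw [h1]
    have hdla : d (Sum.inl a) = s := by simp [hd]
    rw [hdla]
    have hkey : (N - 3) * b + c < 2 * N - 4 := by
      rw [hb, hc]
      have e1 : (N - 3) * (1 / (2 * (N - 3) * (s + 1))) = 1 / (2 * (s + 1)) := by
        field_simp
      have e2 : 1 / (2 * (s + 1)) < 1 / (s + 1) := by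
        apply div_lt_div_of_pos_left one_pos hs1
        linarith
      calc (N - 3) * (2 + 1 / (2 * (N - 3) * (s + 1))) + (2 - 1 / (s + 1))
          = 2 * N - 4 + ((N - 3) * (1 / (2 * (N - 3) * (s + 1))) - 1 / (s + 1)) := by ring
        _ = 2 * N - 4 + (1 / (2 * (s + 1)) - 1 / (s + 1)) := by rw [e1]
        _ < 2 * N - 4 := by linarith
    nlinarith [hs2, hs0]
  · -- row of a matching vertex
    rw [Fintype.sum_sum_type]
    have h1 : ∑ x : Fin 2,
        (@SimpleGraph.adjMatrix ℝ _ G (Classical.decRel G.Adj) _ _) (Sum.inr j) (Sum.inl x)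
          * d (Sum.inl x) = 2 * s := by
      rw [Fin.sum_univ_two]
      simp [hGdef, SimpleGraph.adjMatrix, hd]
      ring
    rw [h1]
    by_cases hj : (j : ℕ) = n - 3
    · -- isolated vertex
      have h2 : ∑ y : Fin (n - 2),
          (@SimpleGraph.adjMatrix ℝ _ G (Classical.decRel G.Adj) _ _) (Sum.inr j) (Sum.inr y)
            * d (Sum.inr y) = 0 := by
        refine Finset.sum_eq_zero fun y _ => ?_
        have hadj : ¬ (matchingGraph (n - 2)).Adj j y := by
          rintro ⟨hne, hdiv⟩
          have hyn : (y : ℕ) < n - 2 := y.isLt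
          have hne' : (j : ℕ) ≠ (y : ℕ) := fun h => hne (Fin.ext h)
          omega
        simp [hGdef, SimpleGraph.adjMatrix, hadj]
      rw [h2]
      have hdj : d (Sum.inr j) = c := by simp [hd, hj]
      rw [hdj]
      have : (s + 1) * c = 2 * s + 1 := by
        rw [hc]; field_simp; ring
      rw [this]; linarith
    · -- matched vertex
      have hdj : d (Sum.inr j) = b := by simp [hd, hj]
      rw [hdj]
      have h2 : ∑ y : Fin (n - 2),
          (@SimpleGraph.adjMatrix ℝ _ G (Classical.decRel G.Adj) _ _) (Sum.inr j) (Sum.inr y)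
            * d (Sum.inr y) ≤ b := by
        have step1 : ∑ y : Fin (n - 2),
            (@SimpleGraph.adjMatrix ℝ _ G (Classical.decRel G.Adj) _ _) (Sum.inr j) (Sum.inr y)
              * d (Sum.inr y)
            ≤ ∑ y : Fin (n - 2),
              (if (matchingGraph (n - 2)).Adj j y then b else 0) := by
          refine Finset.sum_le_sum fun y _ => ?_
          have hent : (@SimpleGraph.adjMatrix ℝ _ G (Classical.decRel G.Adj) _ _)
              (Sum.inr j) (Sum.inr y)
              = if (matchingGraph (n - 2)).Adj j y then (1:ℝ) else 0 := by
            by_cases hadj : (matchingGraph (n - 2)).Adj j y <;>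
              simp [hGdef, SimpleGraph.adjMatrix, hadj]
          rw [hent]
          by_cases hadj : (matchingGraph (n - 2)).Adj j y
          · rw [if_pos hadj, if_pos hadj, one_mul]
            simp only [hd, Sum.elim_inr]
            split
            · exact hcb
            · exact le_refl b
          · rw [if_neg hadj, if_neg hadj, zero_mul]
        have step2 : ∑ y : Fin (n - 2),
            (if (matchingGraph (n - 2)).Adj j y then b else 0)
            = (Finset.univ.filter fun y => (matchingGraph (n - 2)).Adj j y).card • b := by
          rw [Finset.sum_ite, Finset.sum_const, Finset.sum_const_zero, add_zero]
        have hcard : (Finset.univ.filter fun y => (matchingGraph (n - 2)).Adj j y).card ≤ 1 := by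
          apply Finset.card_le_one.mpr
          intro y hy z hz
          have hy' := (Finset.mem_filter.mp hy).2
          have hz' := (Finset.mem_filter.mp hz).2
          obtain ⟨hy1, hy2⟩ := hy'
          obtain ⟨hz1, hz2⟩ := hz'
          have hy1' : (j : ℕ) ≠ (y : ℕ) := fun h => hy1 (Fin.ext h)
          have hz1' : (j : ℕ) ≠ (z : ℕ) := fun h => hz1 (Fin.ext h)
          apply Fin.ext
          omega
        calc ∑ y : Fin (n - 2),
            (@SimpleGraph.adjMatrix ℝ _ G (Classical.decRel G.Adj) _ _) (Sum.inr j) (Sum.inr y)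
              * d (Sum.inr y)
            ≤ (Finset.univ.filter fun y => (matchingGraph (n - 2)).Adj j y).card • b := by
              rw [← step2]; exact step1
          _ ≤ 1 * b := by
              rw [nsmul_eq_mul]
              exact mul_le_mul_of_nonneg_right (by exact_mod_cast hcard) hbpos.le
          _ = b := one_mul b
      have : 2 * s + b < (s + 1) * b := by nlinarith [hs0, hb2]
      linarith
end

section
/- Let G be a planar graph, x, w two vertices of G, and C a cycle contained in the common neighborhood of x and w, with all vertices of C adjacent to both x and w. Then every path in G from x to w meets V(C); that is, x and w lie in different components of G − V(C). -/
open SimpleGraph Filter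

set_option linter.unusedVariables false

lemma induce_singleton_connected' {V : Type*} (G : SimpleGraph V) (v : V) :
    (G.induce {v}).Connected := by
  rw [connected_iff]
  refine ⟨fun a b => ?_, ⟨⟨v, rfl⟩⟩⟩
  have : a = b := Subtype.ext (a.2.trans b.2.symm)
  exact this ▸ Reachable.rfl

lemma cyc_adj {m : ℕ} (hm : 3 ≤ m) (a b : ℕ) (ha : a < m) (hb : b < m)
    (h : b = a + 1 ∨ (a = m - 1 ∧ b = 0)) :
    (cycleGraph m).Adj ⟨a, ha⟩ ⟨b, hb⟩ := by
  rw [cycleGraph_adj']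
  right
  rw [Fin.sub_def]
  simp only
  rcases h with h | ⟨h1, h2⟩
  · have : m - a + b = m + 1 := by omega
    rw [this, Nat.add_mod_left, Nat.mod_eq_of_lt (by omega)]
  · have : m - a + b = 1 := by omega
    rw [this, Nat.mod_eq_of_lt (by omega)]

lemma arcWalk {m : ℕ} (hm : 3 ≤ m) : ∀ j (h2 : 2 ≤ j) (hj : j < m),
    ∃ q : (cycleGraph m).Walk ⟨2, by omega⟩ ⟨j, hj⟩,
      {v | v ∈ q.support} = {v : Fin m | 2 ≤ v.val ∧ v.val ≤ j} := by
  intro j h2 hj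
  induction j, h2 using Nat.le_induction with
  | base =>
    refine ⟨Walk.nil, ?_⟩
    ext v
    simp [Fin.ext_iff]
    omega
  | succ j hj2 ih =>
    obtain ⟨q, hq⟩ := ih (by omega)
    refine ⟨q.concat (cyc_adj hm j (j+1) (by omega) hj (Or.inl rfl)), ?_⟩
    ext v
    simp only [Set.mem_setOf_eq, Walk.support_concat, List.concat_eq_append,
      List.mem_append, List.mem_singleton]
    rw [show (v ∈ q.support) = (v ∈ {v | v ∈ q.support}) from rfl, hq]
    simp [Fin.ext_iff]
    omega

/-- If `C` is a cycle inside the common neighborhood of two vertices `x, w` of a planar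
graph `G`, then every path from `x` to `w` meets `V(C)`. -/
theorem planar_cycle_separates {V : Type*} (G : SimpleGraph V) (hG : IsPlanar G)
    (x w : V) (hxw : x ≠ w) (m : ℕ) (hm : 3 ≤ m)
    (f : cycleGraph m →g G) (hf : Function.Injective f)
    (hfx : ∀ i, G.Adj x (f i)) (hfw : ∀ i, G.Adj w (f i))
    (hx : x ∉ Set.range f) (hw : w ∉ Set.range f) :
    ∀ p : G.Walk x w, p.IsPath → ∃ v ∈ p.support, v ∈ Set.range f  := by
  intro p hp
  by_contra hcon
  push_neg at hcon
  obtain ⟨y, hwy, q, hq⟩ := Walk.exists_eq_cons_of_ne (Ne.symm hxw) p.reverse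
  have hqsub : ∀ v ∈ q.support, v ∈ p.support := by
    intro v hv
    have h2 : v ∈ p.reverse.support := by rw [hq]; exact List.mem_cons_of_mem _ hv
    rwa [Walk.support_reverse, List.mem_reverse] at h2
  have hwq : w ∉ q.support := by
    have h2 := hp.reverse
    rw [hq, Walk.cons_isPath_iff] at h2
    exact h2.2
  have h0m : (0:ℕ) < m := by omega
  have h1m : (1:ℕ) < m := by omega
  have h2m : (2:ℕ) < m := by omega
  have hlm : m - 1 < m := by omega
  set c0 : Fin m := ⟨0, h0m⟩ with hc0
  set c1 : Fin m := ⟨1, h1m⟩ with hc1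
  set c2 : Fin m := ⟨2, h2m⟩ with hc2
  set cl : Fin m := ⟨m-1, hlm⟩ with hcl
  obtain ⟨aw, haw⟩ := arcWalk hm (m-1) (by omega) hlm
  set S0 : Set V := {v | v ∈ q.support} with hS0def
  set S4 : Set V := {v | v ∈ (aw.map f).support} with hS4def
  have hS4 : S4 = f '' {v : Fin m | 2 ≤ v.val} := by
    rw [hS4def]; ext v
    simp only [Set.mem_setOf_eq, Walk.support_map, List.mem_map, Set.mem_image]
    constructor
    · rintro ⟨a, haa, rfl⟩
      have h3 : a ∈ {v : Fin m | 2 ≤ v.val ∧ v.val ≤ m-1} := haw ▸ haa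
      exact ⟨a, h3.1, rfl⟩
    · rintro ⟨a, ha2, rfl⟩
      refine ⟨a, ?_, rfl⟩
      have h3 : a ∈ {v : Fin m | 2 ≤ v.val ∧ v.val ≤ m-1} :=
        ⟨ha2, by have := a.isLt; omega⟩
      rw [← haw] at h3; exact h3
  have hS0p : ∀ v ∈ S0, v ∉ Set.range f := fun v hv => hcon v (hqsub v hv)
  have hxS0 : x ∈ S0 := q.end_mem_support
  have hyS0 : y ∈ S0 := q.start_mem_support
  have hfc2S4 : f c2 ∈ S4 := by rw [hS4]; exact ⟨c2, le_refl 2, rfl⟩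
  have hfclS4 : f cl ∈ S4 := by rw [hS4]; exact ⟨cl, by simp [hcl]; omega, rfl⟩
  have hS4r : S4 ⊆ Set.range f := by
    rw [hS4]; rintro _ ⟨a, _, rfl⟩; exact ⟨a, rfl⟩
  have a01 : G.Adj (f c0) (f c1) := f.map_adj (cyc_adj hm 0 1 h0m h1m (Or.inl rfl))
  have a12 : G.Adj (f c1) (f c2) := f.map_adj (cyc_adj hm 1 2 h1m h2m (Or.inl rfl))
  have a0l : G.Adj (f c0) (f cl) :=
    (f.map_adj (cyc_adj hm (m-1) 0 hlm h0m (Or.inr ⟨rfl, rfl⟩))).symm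
  set B : Fin 5 → Set V := ![S0, {w}, {f c0}, {f c1}, S4] with hB
  -- disjointness facts
  have d01 : Disjoint S0 {w} := Set.disjoint_singleton_right.mpr hwq
  have d02 : Disjoint S0 {f c0} :=
    Set.disjoint_singleton_right.mpr (fun h => hS0p _ h ⟨c0, rfl⟩)
  have d03 : Disjoint S0 {f c1} :=
    Set.disjoint_singleton_right.mpr (fun h => hS0p _ h ⟨c1, rfl⟩)
  have d04 : Disjoint S0 S4 :=
    Set.disjoint_left.mpr (fun {v} hv hv4 => hS0p v hv (hS4r hv4))
  have d12 : Disjoint ({w} : Set V) {f c0} :=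
    Set.disjoint_singleton_right.mpr (by simp; exact fun h => hw ⟨c0, h⟩)
  have d13 : Disjoint ({w} : Set V) {f c1} :=
    Set.disjoint_singleton_right.mpr (by simp; exact fun h => hw ⟨c1, h⟩)
  have d14 : Disjoint ({w} : Set V) S4 :=
    Set.disjoint_left.mpr (by rintro v rfl hv4; exact hw (hS4r hv4))
  have hne01 : c0 ≠ c1 := by simp [hc0, hc1, Fin.ext_iff]
  have d23 : Disjoint ({f c0} : Set V) {f c1} :=
    Set.disjoint_singleton_right.mpr (by simp; exact fun h => hne01 (hf h.symm))
  have d24 : Disjoint ({f c0} : Set V) S4 := by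
    rw [hS4]
    refine Set.disjoint_left.mpr ?_
    rintro v rfl ⟨a, ha2, hfa⟩
    have h5 : c0 = a := hf hfa.symm
    rw [hc0] at h5
    subst h5
    have h7 : (2:ℕ) ≤ 0 := ha2
    omega
  have d34 : Disjoint ({f c1} : Set V) S4 := by
    rw [hS4]
    refine Set.disjoint_left.mpr ?_
    rintro v rfl ⟨a, ha2, hfa⟩
    have h5 : c1 = a := hf hfa.symm
    rw [hc1] at h5
    subst h5
    have h7 : (2:ℕ) ≤ 1 := ha2
    omega
  refine hG.1 ⟨B, ?_, ?_, ?_, ?_⟩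
  · intro i
    fin_cases i
    · exact ⟨x, hxS0⟩
    · exact ⟨w, rfl⟩
    · exact ⟨f c0, rfl⟩
    · exact ⟨f c1, rfl⟩
    · exact ⟨f c2, hfc2S4⟩
  · intro i
    fin_cases i
    · exact q.connected_induce_support
    · exact induce_singleton_connected' G w
    · exact induce_singleton_connected' G (f c0)
    · exact induce_singleton_connected' G (f c1)
    · exact (aw.map f).connected_induce_support
  · intro i j hij
    fin_cases i <;> fin_cases j <;>
      first
        | exact absurd rfl hij
        | exact d01 | exact d02 | exact d03 | exact d04
        | exact d12 | exact d13 | exact d14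
        | exact d23 | exact d24 | exact d34
        | exact d01.symm | exact d02.symm | exact d03.symm | exact d04.symm
        | exact d12.symm | exact d13.symm | exact d14.symm
        | exact d23.symm | exact d24.symm | exact d34.symm
  · intro i j hadj
    fin_cases i <;> fin_cases j <;>
      first
        | exact absurd rfl hadj
        | exact ⟨y, hyS0, w, rfl, hwy.symm⟩
        | exact ⟨w, rfl, y, hyS0, hwy⟩
        | exact ⟨x, hxS0, f c0, rfl, hfx c0⟩
        | exact ⟨f c0, rfl, x, hxS0, (hfx c0).symm⟩
        | exact ⟨x, hxS0, f c1, rfl, hfx c1⟩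
        | exact ⟨f c1, rfl, x, hxS0, (hfx c1).symm⟩
        | exact ⟨x, hxS0, f c2, hfc2S4, hfx c2⟩
        | exact ⟨f c2, hfc2S4, x, hxS0, (hfx c2).symm⟩
        | exact ⟨w, rfl, f c0, rfl, hfw c0⟩
        | exact ⟨f c0, rfl, w, rfl, (hfw c0).symm⟩
        | exact ⟨w, rfl, f c1, rfl, hfw c1⟩
        | exact ⟨f c1, rfl, w, rfl, (hfw c1).symm⟩
        | exact ⟨w, rfl, f c2, hfc2S4, hfw c2⟩
        | exact ⟨f c2, hfc2S4, w, rfl, (hfw c2).symm⟩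
        | exact ⟨f c0, rfl, f c1, rfl, a01⟩
        | exact ⟨f c1, rfl, f c0, rfl, a01.symm⟩
        | exact ⟨f c0, rfl, f cl, hfclS4, a0l⟩
        | exact ⟨f cl, hfclS4, f c0, rfl, a0l.symm⟩
        | exact ⟨f c1, rfl, f c2, hfc2S4, a12⟩
        | exact ⟨f c2, hfc2S4, f c1, rfl, a12.symm⟩
end

section
/- Let G be a graph on n vertices with maximum spectral radius among n-vertex planar graphs, λ = λ(G), and v its Perron vector with max-norm 1. Then the set L = {z : v_z > ε} has size at most 3√(2n-4)/ε for any ε > 0. -/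
open SimpleGraph Filter Matrix

set_option linter.unusedVariables false

set_option linter.unusedSectionVars false
set_option maxHeartbeats 1000000

section Aux
variable {α β γ : Type*}

lemma connected_induce_singleton (G : SimpleGraph α) (a : α) :
    (G.induce {a}).Connected := by
  haveI : Nonempty ({a} : Set α) := ⟨⟨a, rfl⟩⟩
  refine ⟨fun x y => ?_⟩
  have : x = y := Subtype.ext (by rw [x.2, y.2])
  exact this ▸ SimpleGraph.Reachable.refl x

lemma connected_induce_pair {G : SimpleGraph α} {a b : α} (h : G.Adj a b) :
    (G.induce {a, b}).Connected := by
  haveI : Nonempty ({a, b} : Set α) := ⟨⟨a, Or.inl rfl⟩⟩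
  refine ⟨fun x y => ?_⟩
  have adj : (G.induce {a, b}).Adj ⟨a, Or.inl rfl⟩ ⟨b, Or.inr rfl⟩ := h
  have hx := x.2
  have hy := y.2
  rcases hx with hx | hx <;> rcases hy with hy | hy
  · exact (Subtype.ext (hx.trans hy.symm) : x = y) ▸ SimpleGraph.Reachable.refl x
  · have : x = ⟨a, Or.inl rfl⟩ := Subtype.ext hx
    have : (G.induce {a,b}).Reachable x ⟨b, Or.inr rfl⟩ := this ▸ adj.reachable
    exact this.trans (by exact (Subtype.ext hy.symm : (⟨b, Or.inr rfl⟩ : {x // x ∈ ({a,b}:Set α)}) = y) ▸ SimpleGraph.Reachable.refl _)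
  · have hxa : x = ⟨b, Or.inr rfl⟩ := Subtype.ext hx
    have : (G.induce {a,b}).Reachable x ⟨a, Or.inl rfl⟩ := hxa ▸ adj.symm.reachable
    exact this.trans ((Subtype.ext hy.symm : (⟨a, Or.inl rfl⟩ : {x // x ∈ ({a,b}:Set α)}) = y) ▸ SimpleGraph.Reachable.refl _)
  · exact (Subtype.ext (hx.trans hy.symm) : x = y) ▸ SimpleGraph.Reachable.refl x

lemma hasMinor_mono {G G' : SimpleGraph α} {H : SimpleGraph β} (hle : G ≤ G')
    (h : HasMinor G H) : HasMinor G' H := by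
  obtain ⟨f, hne, hconn, hdisj, hadj⟩ := h
  refine ⟨f, hne, fun w => (hconn w).mono (fun x y hxy => hle hxy), hdisj,
    fun w₁ w₂ h12 => ?_⟩
  obtain ⟨u, hu, v, hv, huv⟩ := hadj w₁ w₂ h12
  exact ⟨u, hu, v, hv, hle huv⟩

lemma connected_induce_iUnion {G : SimpleGraph α} {H : SimpleGraph β}
    (f : β → Set α) (t : Set β) (ht : (H.induce t).Connected)
    (hconn : ∀ b, (G.induce (f b)).Connected) (hne : ∀ b, (f b).Nonempty)
    (hadj : ∀ b₁ b₂, H.Adj b₁ b₂ → ∃ u ∈ f b₁, ∃ v ∈ f b₂, G.Adj u v) :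
    (G.induce (⋃ b ∈ t, f b)).Connected := by
  set U : Set α := ⋃ b ∈ t, f b with hU
  have hsub : ∀ b ∈ t, f b ⊆ U := fun b hb x hx => Set.mem_biUnion hb hx
  -- intra-piece reachability
  have intra : ∀ b (hb : b ∈ t), ∀ u (hu : u ∈ f b) v (hv : v ∈ f b),
      (G.induce U).Reachable ⟨u, hsub b hb hu⟩ ⟨v, hsub b hb hv⟩ := by
    intro b hb u hu v hv
    have hr : (G.induce (f b)).Reachable ⟨u, hu⟩ ⟨v, hv⟩ :=
      (hconn b).preconnected _ _
    let φ : G.induce (f b) →g G.induce U :=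
      ⟨fun x => ⟨x.1, hsub b hb x.2⟩, fun {x y} hxy => hxy⟩
    exact hr.map φ
  obtain ⟨b₀, hb₀⟩ : t.Nonempty := by
    obtain ⟨⟨b, hb⟩⟩ := ht.nonempty
    exact ⟨b, hb⟩
  haveI : Nonempty U := ⟨⟨(hne b₀).choose, hsub b₀ hb₀ (hne b₀).choose_spec⟩⟩
  refine ⟨fun x y => ?_⟩
  obtain ⟨b₁, hb₁, hx⟩ : ∃ b, ∃ _ : b ∈ t, x.1 ∈ f b := Set.mem_iUnion₂.mp x.2
  obtain ⟨b₂, hb₂, hy⟩ : ∃ b, ∃ _ : b ∈ t, y.1 ∈ f b := Set.mem_iUnion₂.mp y.2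
  -- reachability across pieces by induction on walks in H.induce t
  have key : ∀ (p q : {z // z ∈ t}) (w : (H.induce t).Walk p q),
      ∀ u (hu : u ∈ f p.1) v (hv : v ∈ f q.1),
        (G.induce U).Reachable ⟨u, hsub _ p.2 hu⟩ ⟨v, hsub _ q.2 hv⟩ := by
    intro p q w
    induction w with
    | @nil a =>
      intro u hu v hv
      exact intra _ a.2 u hu v hv
    | @cons a b c hab w ih =>
      intro u hu v hv
      obtain ⟨u', hu', v', hv', huv⟩ := hadj a.1 b.1 hab
      have r1 : (G.induce U).Reachable ⟨u, hsub _ a.2 hu⟩ ⟨u', hsub _ a.2 hu'⟩ :=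
        intra _ a.2 u hu u' hu'
      have e2 : (G.induce U).Adj ⟨u', hsub _ a.2 hu'⟩ ⟨v', hsub _ b.2 hv'⟩ := huv
      have r3 := ih v' hv' v hv
      exact (r1.trans e2.reachable).trans r3
  have hx' : x = ⟨x.1, hsub _ hb₁ hx⟩ := Subtype.ext rfl
  have hy' : y = ⟨y.1, hsub _ hb₂ hy⟩ := Subtype.ext rfl
  rw [hx', hy']
  exact key ⟨b₁, hb₁⟩ ⟨b₂, hb₂⟩ (ht.preconnected _ _).some _ hx _ hy

lemma hasMinor_trans {G : SimpleGraph α} {H : SimpleGraph β} {K : SimpleGraph γ}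
    (hGH : HasMinor G H) (hHK : HasMinor H K) : HasMinor G K := by
  obtain ⟨f, hfne, hfconn, hfdisj, hfadj⟩ := hGH
  obtain ⟨g, hgne, hgconn, hgdisj, hgadj⟩ := hHK
  refine ⟨fun c => ⋃ b ∈ g c, f b, ?_, ?_, ?_, ?_⟩
  · intro c
    obtain ⟨b, hb⟩ := hgne c
    obtain ⟨x, hx⟩ := hfne b
    exact ⟨x, Set.mem_biUnion hb hx⟩
  · intro c
    exact connected_induce_iUnion f (g c) (hgconn c) hfconn hfne hfadj
  · intro c₁ c₂ hc
    rw [Set.disjoint_left]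
    rintro x hx₁ hx₂
    obtain ⟨b₁, hb₁, hxb₁⟩ : ∃ b ∈ g c₁, x ∈ f b := by simpa using hx₁
    obtain ⟨b₂, hb₂, hxb₂⟩ : ∃ b ∈ g c₂, x ∈ f b := by simpa using hx₂
    rcases eq_or_ne b₁ b₂ with rfl | hne
    · exact (Set.disjoint_left.mp (hgdisj hc) hb₁) hb₂
    · exact (Set.disjoint_left.mp (hfdisj hne) hxb₁) hxb₂
  · intro c₁ c₂ hc
    obtain ⟨b₁, hb₁, b₂, hb₂, hb⟩ := hgadj c₁ c₂ hc
    obtain ⟨u, hu, v, hv, huv⟩ := hfadj b₁ b₂ hb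
    exact ⟨u, Set.mem_biUnion hb₁ hu, v, Set.mem_biUnion hb₂ hv, huv⟩

lemma hasMinor_of_induce {G : SimpleGraph α} {s : Set α} {K : SimpleGraph γ}
    (h : HasMinor (G.induce s) K) : HasMinor G K := by
  obtain ⟨f, hne, hconn, hdisj, hadj⟩ := h
  refine ⟨fun c => Subtype.val '' f c, ?_, ?_, ?_, ?_⟩
  · intro c; obtain ⟨x, hx⟩ := hne c; exact ⟨x.1, ⟨x, hx, rfl⟩⟩
  · intro c
    refine SimpleGraph.Connected.map
      (f := ⟨fun (p : {x // x ∈ f c}) =>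
        (⟨p.1.1, ⟨p.1, p.2, rfl⟩⟩ : {x // x ∈ Subtype.val '' f c}),
        fun {x y} hxy => hxy⟩) ?_ (hconn c)
    rintro ⟨x, ⟨p, hp, rfl⟩⟩
    exact ⟨⟨p, hp⟩, rfl⟩
  · intro c₁ c₂ hc
    rw [Set.disjoint_left]
    rintro x ⟨p, hp, rfl⟩ ⟨q, hq, hqx⟩
    have : q = p := Subtype.ext hqx
    exact (Set.disjoint_left.mp (hdisj hc) hp) (this ▸ hq)
  · intro c₁ c₂ hc
    obtain ⟨u, hu, v, hv, huv⟩ := hadj c₁ c₂ hc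
    exact ⟨u.1, ⟨u, hu, rfl⟩, v.1, ⟨v, hv, rfl⟩, huv⟩

end Aux

section Contract
variable {V : Type*} [Fintype V] [DecidableEq V]

/-- Contract the edge `x y`, deleting `y` and attaching its edges to `x`. -/
def contractEdge (G : SimpleGraph V) (x y : V) : SimpleGraph {z : V // z ≠ y} where
  Adj a b := a ≠ b ∧ (G.Adj a b ∨ ((a : V) = x ∧ G.Adj y b) ∨ ((b : V) = x ∧ G.Adj y a))
  symm := ⟨by
    rintro a b ⟨hab, h⟩
    exact ⟨hab.symm, by tauto⟩⟩
  loopless := ⟨by rintro a ⟨h, -⟩; exact h rfl⟩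

lemma contractEdge_hasMinor {G : SimpleGraph V} {x y : V} (hxy : G.Adj x y) :
    HasMinor G (contractEdge G x y) := by
  classical
  refine ⟨fun a => if (a : V) = x then {x, y} else {(a : V)}, ?_, ?_, ?_, ?_⟩
  · intro a
    beta_reduce
    by_cases hax : (a : V) = x
    · rw [if_pos hax]; exact ⟨x, Or.inl rfl⟩
    · rw [if_neg hax]; exact ⟨(a : V), rfl⟩
  · intro a
    beta_reduce
    by_cases hax : (a : V) = x
    · rw [if_pos hax]; exact connected_induce_pair hxy
    · rw [if_neg hax]; exact connected_induce_singleton G _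
  · intro a b hab
    have hval : (a : V) ≠ (b : V) := fun h => hab (Subtype.ext h)
    beta_reduce
    rcases eq_or_ne (a : V) x with ha | ha <;> rcases eq_or_ne (b : V) x with hb | hb
    · exact absurd (ha.trans hb.symm) hval
    · rw [if_pos ha, if_neg hb, Set.disjoint_left]
      intro z hz1 hz2
      simp only [Set.mem_insert_iff, Set.mem_singleton_iff] at hz1 hz2
      rcases hz1 with hz1 | hz1
      · exact hb (hz2.symm.trans hz1)
      · exact b.2 (hz2.symm.trans hz1)
    · rw [if_neg ha, if_pos hb, Set.disjoint_left]
      intro z hz1 hz2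
      simp only [Set.mem_insert_iff, Set.mem_singleton_iff] at hz1 hz2
      rcases hz2 with hz2 | hz2
      · exact ha (hz1.symm.trans hz2)
      · exact a.2 (hz1.symm.trans hz2)
    · rw [if_neg ha, if_neg hb, Set.disjoint_left]
      rintro z hz hz2
      rw [Set.mem_singleton_iff] at hz hz2
      exact hval (hz ▸ hz2 ▸ rfl)
  · rintro a b ⟨hab, h⟩
    beta_reduce
    have hmem : ∀ c : {z : V // z ≠ y},
        (c : V) ∈ (if (c : V) = x then ({x, y} : Set V) else {(c : V)}) := by
      intro c; split
      · rename_i hc; rw [hc]; exact Or.inl rfl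
      · exact rfl
    have hymem : ∀ c : {z : V // z ≠ y}, (c : V) = x →
        y ∈ (if (c : V) = x then ({x, y} : Set V) else {(c : V)}) := by
      intro c hc; rw [if_pos hc]; exact Or.inr rfl
    rcases h with h | ⟨hax, hyb⟩ | ⟨hbx, hya⟩
    · exact ⟨a, hmem a, b, hmem b, h⟩
    · exact ⟨y, hymem a hax, b, hmem b, hyb⟩
    · exact ⟨a, hmem a, y, hymem b hbx, hya.symm⟩

private lemma sym2_recover {G : SimpleGraph V} {x y p q r s : V}
    (hadj1 : G.Adj p q) (hne1 : s(p,q) ≠ s(x,y))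
    (hpy1 : p = y → ¬G.Adj x q) (hqy1 : q = y → ¬G.Adj x p)
    (hadj2 : G.Adj r s) (hne2 : s(r,s) ≠ s(x,y))
    (hpy2 : r = y → ¬G.Adj x s) (hqy2 : s = y → ¬G.Adj x r)
    (h1 : p = r ∨ (p = y ∧ r = x) ∨ (p = x ∧ r = y))
    (h2 : q = s ∨ (q = y ∧ s = x) ∨ (q = x ∧ s = y)) : s(p,q) = s(r,s) := by
  rcases h1 with e1 | ⟨ey1, ex1⟩ | ⟨ex1, ey1⟩
  · rcases h2 with e2 | ⟨ey2, ex2⟩ | ⟨ex2, ey2⟩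
    · rw [e1, e2]
    · rw [← e1, ex2] at hadj2
      exact absurd hadj2.symm (hqy1 ey2)
    · rw [e1, ex2] at hadj1
      exact absurd hadj1.symm (hqy2 ey2)
  · rcases h2 with e2 | ⟨ey2, ex2⟩ | ⟨ex2, ey2⟩
    · rw [ex1, ← e2] at hadj2
      exact absurd hadj2 (hpy1 ey1)
    · rw [ey1, ey2] at hadj1
      exact absurd hadj1 (G.loopless.irrefl y)
    · exact absurd (by rw [ey1, ex2]; exact Sym2.eq_swap) hne1
  · rcases h2 with e2 | ⟨ey2, ex2⟩ | ⟨ex2, ey2⟩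
    · rw [ex1, e2] at hadj1
      exact absurd hadj1 (hpy2 ey1)
    · exact absurd (by rw [ex1, ey2]) hne1
    · rw [ex1, ex2] at hadj1
      exact absurd hadj1 (G.loopless.irrefl x)

lemma contractEdge_card_edges {G : SimpleGraph V} [DecidableRel G.Adj] {x y : V}
    (hxy : G.Adj x y) :
    G.edgeFinset.card ≤ (contractEdge G x y).edgeSet.ncard + 1 +
      (G.neighborFinset x ∩ G.neighborFinset y).card := by
  classical
  have hne : x ≠ y := hxy.ne
  set G' := contractEdge G x y with hG'
  set h : V → {z : V // z ≠ y} := fun z => if hz : z = y then ⟨x, hne⟩ else ⟨z, hz⟩ with hh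
  have hhy : h y = ⟨x, hne⟩ := by simp [hh]
  have hhz : ∀ z (hz : z ≠ y), h z = ⟨z, hz⟩ := by intro z hz; simp [hh, hz]
  set D : Finset (Sym2 V) :=
    insert s(x, y) ((G.neighborFinset x ∩ G.neighborFinset y).image (fun w => s(y, w))) with hD
  set B : Finset (Sym2 V) := G.edgeFinset \ D with hB
  have hcardD : D.card ≤ 1 + (G.neighborFinset x ∩ G.neighborFinset y).card := by
    refine (Finset.card_insert_le _ _).trans ?_
    rw [add_comm]
    exact Nat.add_le_add_left Finset.card_image_le 1
  have hEB : G.edgeFinset.card ≤ B.card + D.card := by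
    have hsub : G.edgeFinset ⊆ B ∪ D := by
      rw [hB, Finset.sdiff_union_self_eq_union]; exact Finset.subset_union_left
    exact (Finset.card_le_card hsub).trans (Finset.card_union_le _ _)
  have memB : ∀ {p q : V}, s(p, q) ∈ B → G.Adj p q ∧ s(p, q) ≠ s(x, y) ∧
      (p = y → ¬ G.Adj x q) ∧ (q = y → ¬ G.Adj x p) := by
    intro p q hpq
    rw [hB, Finset.mem_sdiff] at hpq
    obtain ⟨hE, hnD⟩ := hpq
    rw [SimpleGraph.mem_edgeFinset, SimpleGraph.mem_edgeSet] at hE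
    refine ⟨hE, ?_, ?_, ?_⟩
    · intro hcon; exact hnD (by rw [hD, hcon]; exact Finset.mem_insert_self _ _)
    · intro hpeq hxq
      refine hnD ?_
      rw [hD]
      have : s(p, q) = s(y, q) := by rw [hpeq]
      rw [this]
      refine Finset.mem_insert_of_mem (Finset.mem_image.mpr ⟨q, ?_, rfl⟩)
      rw [Finset.mem_inter, SimpleGraph.mem_neighborFinset, SimpleGraph.mem_neighborFinset]
      exact ⟨hxq, hpeq ▸ hE⟩
    · intro hqeq hxp
      refine hnD ?_
      rw [hD]
      have : s(p, q) = s(y, p) := by rw [hqeq, Sym2.eq_swap]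
      rw [this]
      refine Finset.mem_insert_of_mem (Finset.mem_image.mpr ⟨p, ?_, rfl⟩)
      rw [Finset.mem_inter, SimpleGraph.mem_neighborFinset, SimpleGraph.mem_neighborFinset]
      exact ⟨hxp, (hqeq ▸ hE.symm : G.Adj y p)⟩
  have himg : ∀ e ∈ B, Sym2.map h e ∈ G'.edgeSet := by
    intro e he
    induction e with
    | _ p q =>
      obtain ⟨hadj, hnexy, hpy, hqy⟩ := memB he
      rw [Sym2.map_pair_eq, SimpleGraph.mem_edgeSet]
      rcases eq_or_ne p y with hpy' | hp
      · have hq : q ≠ y := by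
          intro hc
          rw [hpy', hc] at hadj
          exact G.loopless.irrefl y hadj
        rw [hpy', hhy, hhz q hq]
        have hqx : q ≠ x := by
          intro hc
          refine hnexy ?_
          rw [hpy', hc]
          exact Sym2.eq_swap
        have hyq : G.Adj y q := by rw [hpy'] at hadj; exact hadj
        exact ⟨fun hc => hqx (Subtype.mk_eq_mk.mp hc).symm, Or.inr (Or.inl ⟨rfl, hyq⟩)⟩
      · rcases eq_or_ne q y with hqy' | hq
        · rw [hqy', hhy, hhz p hp]
          have hpx : p ≠ x := by
            intro hc
            exact hnexy (by rw [hc, hqy'])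
          have hyp : G.Adj y p := by rw [hqy'] at hadj; exact hadj.symm
          exact ⟨fun hc => hpx (Subtype.mk_eq_mk.mp hc), Or.inr (Or.inr ⟨rfl, hyp⟩)⟩
        · rw [hhz p hp, hhz q hq]
          exact ⟨fun hc => (G.loopless.irrefl p ((Subtype.mk_eq_mk.mp hc : p = q) ▸ hadj)),
            Or.inl hadj⟩
  have hcase : ∀ {a b : V}, h a = h b → a = b ∨ (a = y ∧ b = x) ∨ (a = x ∧ b = y) := by
    intro a b hab
    rcases eq_or_ne a y with ha | ha <;> rcases eq_or_ne b y with hb | hb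
    · exact Or.inl (ha.trans hb.symm)
    · rw [ha, hhy, hhz b hb] at hab
      exact Or.inr (Or.inl ⟨ha, (Subtype.mk_eq_mk.mp hab).symm⟩)
    · rw [hb, hhy, hhz a ha] at hab
      exact Or.inr (Or.inr ⟨Subtype.mk_eq_mk.mp hab, hb⟩)
    · rw [hhz a ha, hhz b hb] at hab
      exact Or.inl (Subtype.mk_eq_mk.mp hab)
  have hinj : Set.InjOn (Sym2.map h) B := by
    intro e₁ he₁ e₂ he₂ heq
    induction e₁ with
    | _ p q =>
      induction e₂ with
      | _ r s =>
        obtain ⟨ha1, hn1, hp1, hq1⟩ := memB he₁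
        obtain ⟨ha2, hn2, hp2, hq2⟩ := memB he₂
        rw [Sym2.map_pair_eq, Sym2.map_pair_eq, Sym2.eq_iff] at heq
        rcases heq with ⟨h1, h2⟩ | ⟨h1, h2⟩
        · exact sym2_recover ha1 hn1 hp1 hq1 ha2 hn2 hp2 hq2 (hcase h1) (hcase h2)
        · have hswap : s(r, s) = s(s, r) := Sym2.eq_swap
          rw [hswap]
          exact sym2_recover ha1 hn1 hp1 hq1 ha2.symm (hswap ▸ hn2)
            (fun hs => fun hxr => (hq2 hs) hxr) (fun hr => fun hxs => (hp2 hr) hxs)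
            (hcase h1) (hcase h2)
  have hBcard : B.card ≤ G'.edgeSet.ncard := by
    have : G'.edgeSet.ncard = G'.edgeSet.toFinset.card := Set.ncard_eq_toFinset_card' _
    rw [this]
    refine Finset.card_le_card_of_injOn (Sym2.map h) (fun e he => ?_) hinj
    rw [Finset.mem_coe, Set.mem_toFinset]
    exact himg e he
  omega

end Contract

set_option linter.unusedSectionVars false

section Mader
variable {V : Type*} [Fintype V] [DecidableEq V]

lemma clique5_minor {G : SimpleGraph V} (s : Finset V) (hcard : s.card = 5)
    (hadj : ∀ a ∈ s, ∀ b ∈ s, a ≠ b → G.Adj a b) :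
    HasMinor G (completeGraph (Fin 5)) := by
  have hc : Fintype.card (Fin 5) = Fintype.card {x // x ∈ s} := by
    simp [Fintype.card_coe, hcard]
  let e : Fin 5 ≃ {x // x ∈ s} := Fintype.equivOfCardEq hc
  refine ⟨fun w => {(e w : V)}, fun w => ⟨_, rfl⟩, fun w => connected_induce_singleton G _,
    ?_, ?_⟩
  · intro w₁ w₂ hw
    rw [Set.disjoint_left]
    intro z hz1 hz2
    rw [Set.mem_singleton_iff] at hz1 hz2
    exact hw (e.injective (Subtype.ext (hz1.symm.trans hz2)))
  · intro w₁ w₂ hw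
    refine ⟨_, rfl, _, rfl, hadj _ (e w₁).2 _ (e w₂).2 ?_⟩
    intro hc2
    exact hw (e.injective (Subtype.ext hc2))

lemma exists_trimmed_subgraph (G : SimpleGraph V) [DecidableRel G.Adj] {k : ℕ}
    (hk : k ≤ G.edgeFinset.card) :
    ∃ G' : SimpleGraph V, G' ≤ G ∧ G'.edgeSet.ncard = k := by
  classical
  obtain ⟨t, hts, htc⟩ := Finset.exists_subset_card_eq hk
  refine ⟨SimpleGraph.fromEdgeSet ↑t, ?_, ?_⟩
  · have := SimpleGraph.fromEdgeSet_mono (s := ↑t) (t := G.edgeSet)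
      (by intro e he; exact SimpleGraph.mem_edgeFinset.mp (hts (by simpa using he)))
    rwa [SimpleGraph.fromEdgeSet_edgeSet] at this
  · rw [SimpleGraph.edgeSet_fromEdgeSet]
    have hdiag : (↑t : Set (Sym2 V)) \ {e | e.IsDiag} = ↑t := by
      ext e
      simp only [Set.mem_diff, Set.mem_setOf_eq, Finset.mem_coe, and_iff_left_iff_imp]
      intro he
      exact G.not_isDiag_of_mem_edgeSet (SimpleGraph.mem_edgeFinset.mp (hts he))
    rw [show Sym2.diagSet = {e : Sym2 V | e.IsDiag} from rfl, hdiag]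
    simp [Set.ncard_coe_finset, htc]

lemma isolated_delete_card (G : SimpleGraph V) [DecidableRel G.Adj] {v : V}
    (hv : ∀ w, ¬ G.Adj v w) :
    G.edgeFinset.card ≤ (G.induce {z : V | z ≠ v}).edgeSet.ncard := by
  classical
  set s : Set V := {z : V | z ≠ v} with hs
  set G' := G.induce s with hG'
  have hinj : Function.Injective (Sym2.map (Subtype.val : s → V)) :=
    Sym2.map.injective Subtype.val_injective
  rw [Set.ncard_eq_toFinset_card']
  have himage : G.edgeFinset ⊆ G'.edgeSet.toFinset.image (Sym2.map Subtype.val) := by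
    intro e he
    induction e with
    | _ p q =>
      rw [SimpleGraph.mem_edgeFinset, SimpleGraph.mem_edgeSet] at he
      have hp : p ≠ v := fun hc => hv q (hc ▸ he)
      have hq : q ≠ v := fun hc => hv p (hc ▸ he.symm)
      refine Finset.mem_image.mpr ⟨s(⟨p, hp⟩, ⟨q, hq⟩), ?_, by rw [Sym2.map_pair_eq]⟩
      rw [Set.mem_toFinset, SimpleGraph.mem_edgeSet]
      exact he
  calc G.edgeFinset.card ≤ (G'.edgeSet.toFinset.image (Sym2.map Subtype.val)).card :=
        Finset.card_le_card himage
    _ ≤ G'.edgeSet.toFinset.card := Finset.card_image_le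

lemma card_ne_subtype (v : V) : Fintype.card {z : V // z ≠ v} = Fintype.card V - 1 := by
  classical
  rw [Fintype.card_subtype_compl (p := fun z => z = v)]
  simp [Fintype.card_subtype_eq]

end Mader

section Mader2
variable {V : Type*} [Fintype V] [DecidableEq V]

lemma k5_minor_of_config {G : SimpleGraph V} {v a b c d e : V}
    (hva : G.Adj v a) (hvb : G.Adj v b) (hvc : G.Adj v c) (hvd : G.Adj v d)
    (hve : G.Adj v e) (hac : G.Adj a c) (hcb : G.Adj c b) (had : G.Adj a d)
    (hae : G.Adj a e) (hbd : G.Adj b d) (hbe : G.Adj b e) (hde : G.Adj d e)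
    (hab : a ≠ b) (hcd : c ≠ d) (hce : c ≠ e) :
    HasMinor G (completeGraph (Fin 5)) := by
  refine ⟨![{v}, {a, c}, {b}, {d}, {e}], ?_, ?_, ?_, ?_⟩
  · intro w
    fin_cases w <;> simp
  · intro w
    fin_cases w <;> simp only [Matrix.cons_val_zero, Matrix.cons_val_one, Matrix.head_cons,
      Matrix.cons_val_two, Matrix.tail_cons, Matrix.cons_val_three, Matrix.cons_val_four]
    · exact connected_induce_singleton G _
    · exact connected_induce_pair hac
    · exact connected_induce_singleton G _
    · exact connected_induce_singleton G _
    · exact connected_induce_singleton G _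
  · intro w₁ w₂ hne
    have hvA := hva.ne
    have hvB := hvb.ne
    have hvC := hvc.ne
    have hvD := hvd.ne
    have hvE := hve.ne
    have hCB := hcb.ne
    have hAD := had.ne
    have hAE := hae.ne
    have hBD := hbd.ne
    have hBE := hbe.ne
    have hDE := hde.ne
    fin_cases w₁ <;> fin_cases w₂ <;>
      first
      | exact absurd rfl hne
      | (simp only [Matrix.cons_val_zero, Matrix.cons_val_one, Matrix.head_cons,
          Matrix.cons_val_two, Matrix.tail_cons, Matrix.cons_val_three, Matrix.cons_val_four,
          Set.disjoint_left, Set.mem_insert_iff, Set.mem_singleton_iff]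
         rintro z (rfl | rfl) (rfl | rfl) <;> simp_all)
      | (simp only [Matrix.cons_val_zero, Matrix.cons_val_one, Matrix.head_cons,
          Matrix.cons_val_two, Matrix.tail_cons, Matrix.cons_val_three, Matrix.cons_val_four,
          Set.disjoint_left, Set.mem_insert_iff, Set.mem_singleton_iff]
         rintro z hz1 hz2 <;> simp_all  <;> tauto)
  · intro w₁ w₂ hadj
    rw [completeGraph_eq_top, top_adj] at hadj
    fin_cases w₁ <;> fin_cases w₂ <;>
      simp only [Matrix.cons_val_zero, Matrix.cons_val_one, Matrix.head_cons,
        Matrix.cons_val_two, Matrix.tail_cons, Matrix.cons_val_three, Matrix.cons_val_four] <;>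
      first
      | exact absurd rfl hadj
      | exact ⟨v, rfl, a, Or.inl rfl, hva⟩
      | exact ⟨a, Or.inl rfl, v, rfl, hva.symm⟩
      | exact ⟨v, rfl, b, rfl, hvb⟩
      | exact ⟨b, rfl, v, rfl, hvb.symm⟩
      | exact ⟨v, rfl, d, rfl, hvd⟩
      | exact ⟨d, rfl, v, rfl, hvd.symm⟩
      | exact ⟨v, rfl, e, rfl, hve⟩
      | exact ⟨e, rfl, v, rfl, hve.symm⟩
      | exact ⟨c, Or.inr rfl, b, rfl, hcb⟩
      | exact ⟨b, rfl, c, Or.inr rfl, hcb.symm⟩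
      | exact ⟨a, Or.inl rfl, d, rfl, had⟩
      | exact ⟨d, rfl, a, Or.inl rfl, had.symm⟩
      | exact ⟨a, Or.inl rfl, e, rfl, hae⟩
      | exact ⟨e, rfl, a, Or.inl rfl, hae.symm⟩
      | exact ⟨b, rfl, d, rfl, hbd⟩
      | exact ⟨d, rfl, b, rfl, hbd.symm⟩
      | exact ⟨b, rfl, e, rfl, hbe⟩
      | exact ⟨e, rfl, b, rfl, hbe.symm⟩
      | exact ⟨d, rfl, e, rfl, hde⟩
      | exact ⟨e, rfl, d, rfl, hde.symm⟩

end Mader2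

section Mader3

lemma mader_core : ∀ (N : ℕ) (V : Type) [Fintype V] [DecidableEq V] (G : SimpleGraph V),
    Fintype.card V = N → 5 ≤ N → 3 * N - 5 ≤ G.edgeSet.ncard →
    HasMinor G (completeGraph (Fin 5)) := by
  intro N
  induction N using Nat.strong_induction_on with
  | _ N IH =>
    intro V _ _ G hcard hN hedges
    classical
    letI : DecidableRel G.Adj := Classical.decRel _
    have hef : 3 * N - 5 ≤ G.edgeFinset.card := by
      rwa [Set.ncard_eq_toFinset_card'] at hedges
    obtain ⟨G₀, hle, hE₀⟩ := exists_trimmed_subgraph G hef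
    letI : DecidableRel G₀.Adj := Classical.decRel _
    have hE₀f : G₀.edgeFinset.card = 3 * N - 5 := by
      rw [← hE₀, Set.ncard_eq_toFinset_card']
      congr 1
    have hmN : ∀ x w : V, w ∈ G₀.neighborFinset x ↔ G₀.Adj x w :=
      fun x w => SimpleGraph.mem_neighborFinset G₀ x w
    suffices h : HasMinor G₀ (completeGraph (Fin 5)) by exact hasMinor_mono hle h
    rcases eq_or_lt_of_le hN with h5 | h6
    · -- N = 5 : G₀ is the complete graph on 5 vertices
      have h10 : G₀.edgeFinset.card = 10 := by omega
      have htopcard : (⊤ : SimpleGraph V).edgeFinset.card = 10 := by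
        rw [SimpleGraph.card_edgeFinset_top_eq_card_choose_two, hcard, ← h5]
        decide
      have hsub : G₀.edgeFinset ⊆ (⊤ : SimpleGraph V).edgeFinset :=
        SimpleGraph.edgeFinset_mono le_top
      have heq : G₀.edgeFinset = (⊤ : SimpleGraph V).edgeFinset :=
        Finset.eq_of_subset_of_card_le hsub (by omega)
      have htop : G₀ = ⊤ := SimpleGraph.edgeFinset_inj.mp heq
      refine clique5_minor Finset.univ (by rw [Finset.card_univ, hcard, ← h5]) ?_
      intro x hx y hy hxy
      rw [htop]
      exact hxy
    · -- N ≥ 6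
      by_cases hcase : ∃ x y, G₀.Adj x y ∧
          (G₀.neighborFinset x ∩ G₀.neighborFinset y).card ≤ 2
      · obtain ⟨x, y, hxy, hcc⟩ := hcase
        have hcnt := contractEdge_card_edges hxy
        have hcard' : Fintype.card {z : V // z ≠ y} = N - 1 := by
          rw [card_ne_subtype, hcard]
        have hedge' : 3 * (N - 1) - 5 ≤ (contractEdge G₀ x y).edgeSet.ncard := by omega
        exact hasMinor_trans (contractEdge_hasMinor hxy)
          (IH (N - 1) (by omega) _ (contractEdge G₀ x y) hcard' (by omega) hedge')
      · push_neg at hcase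
        have hcase' : ∀ x y, G₀.Adj x y →
            3 ≤ (G₀.neighborFinset x ∩ G₀.neighborFinset y).card := by
          intro x y h; exact hcase x y h
        -- find a vertex of degree at most 5
        have hsum : ∑ w, G₀.degree w = 2 * (3 * N - 5) := by
          rw [SimpleGraph.sum_degrees_eq_twice_card_edges, hE₀f]
        have hv : ∃ w, G₀.degree w ≤ 5 := by
          by_contra hall
          push_neg at hall
          have h6le : ∀ w ∈ Finset.univ, 6 ≤ G₀.degree w := fun w _ => hall w
          have := Finset.sum_le_sum h6le
          rw [Finset.sum_const, hsum] at this
          simp only [smul_eq_mul] at this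
          rw [Finset.card_univ, hcard] at this
          omega
        obtain ⟨v, hv5⟩ := hv
        by_cases hdeg0 : G₀.degree v = 0
        · -- isolated vertex: delete it
          have hnone : ∀ w, ¬ G₀.Adj v w := by
            intro w hw
            have : w ∈ G₀.neighborFinset v := (hmN _ _).mpr hw
            rw [Finset.card_eq_zero.mp hdeg0] at this
            exact absurd this (Finset.notMem_empty w)
          have hdel := isolated_delete_card G₀ hnone
          have hcardset : Fintype.card ({z : V | z ≠ v} : Set V) = N - 1 := by
            rw [Fintype.card_congr (Equiv.subtypeEquivRight (fun z => Iff.rfl) :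
              ({z : V | z ≠ v} : Set V) ≃ {z : V // z ≠ v})]
            rw [card_ne_subtype, hcard]
          refine hasMinor_of_induce (s := {z : V | z ≠ v})
            (IH (N - 1) (by omega) _ _ hcardset (by omega) (by omega))
        · -- degree of v is between 4 and 5
          have hdpos : 0 < G₀.degree v := Nat.pos_of_ne_zero hdeg0
          obtain ⟨u, hu⟩ := Finset.card_pos.mp hdpos
          have huv : G₀.Adj v u := (hmN _ _).mp hu
          have hcsub : G₀.neighborFinset u ∩ G₀.neighborFinset v ⊆
              (G₀.neighborFinset v).erase u := by
            intro w hw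
            rw [Finset.mem_inter] at hw
            refine Finset.mem_erase.mpr ⟨?_, hw.2⟩
            exact fun hwu => ((hmN _ _).mp hw.1).ne' (hwu ▸ rfl)
          have hd4 : 4 ≤ G₀.degree v := by
            have h3 := hcase' u v huv.symm
            have := Finset.card_le_card hcsub
            have herase := Finset.card_erase_of_mem hu
            unfold SimpleGraph.degree at *
            omega
          -- common-neighbor lower bounds inside the neighborhood of v
          have hkey : ∀ w ∈ G₀.neighborFinset v,
              3 ≤ ((G₀.neighborFinset w ∩ G₀.neighborFinset v).card) ∧
              G₀.neighborFinset w ∩ G₀.neighborFinset v ⊆ (G₀.neighborFinset v).erase w := by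
            intro w hw
            have hadjw : G₀.Adj w v := ((hmN _ _).mp hw).symm
            refine ⟨hcase' w v hadjw, ?_⟩
            intro z hz
            rw [Finset.mem_inter] at hz
            refine Finset.mem_erase.mpr ⟨?_, hz.2⟩
            exact fun hzw => ((hmN _ _).mp hz.1).ne' (hzw ▸ rfl)
          interval_cases hdeg : (G₀.degree v)
          · -- degree 4 : neighborhood is a clique, K5 on {v} ∪ N(v)
            have hclique : ∀ a ∈ G₀.neighborFinset v, ∀ b ∈ G₀.neighborFinset v,
                a ≠ b → G₀.Adj a b := by
              intro a ha b hb hne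
              obtain ⟨h3, hsub⟩ := hkey a ha
              have herase : ((G₀.neighborFinset v).erase a).card = 3 := by
                rw [Finset.card_erase_of_mem ha]
                unfold SimpleGraph.degree at hdeg
                omega
              have heq : G₀.neighborFinset a ∩ G₀.neighborFinset v =
                  (G₀.neighborFinset v).erase a :=
                Finset.eq_of_subset_of_card_le hsub (by omega)
              have hbmem : b ∈ G₀.neighborFinset a ∩ G₀.neighborFinset v := by
                rw [heq]
                exact Finset.mem_erase.mpr ⟨hne.symm, hb⟩
              exact (hmN _ _).mp (Finset.mem_inter.mp hbmem).1
            have hvnot : v ∉ G₀.neighborFinset v := by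
              rw [hmN]
              exact G₀.irrefl
            refine clique5_minor (insert v (G₀.neighborFinset v)) ?_ ?_
            · rw [Finset.card_insert_of_notMem hvnot]
              unfold SimpleGraph.degree at hdeg
              omega
            · intro a ha b hb hne
              rcases Finset.mem_insert.mp ha with rfl | ha' <;>
                rcases Finset.mem_insert.mp hb with rfl | hb'
              · exact absurd rfl hne
              · exact (hmN _ _).mp hb'
              · exact ((hmN _ _).mp ha').symm
              · exact hclique a ha' b hb' hne
          · -- degree 5
            have atMostOne : ∀ u' ∈ G₀.neighborFinset v, ∀ w₁ ∈ G₀.neighborFinset v,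
                ∀ w₂ ∈ G₀.neighborFinset v, w₁ ≠ u' → w₂ ≠ u' → w₁ ≠ w₂ →
                ¬ G₀.Adj u' w₁ → ¬ G₀.Adj u' w₂ → False := by
              intro u' hu' w₁ hw₁ w₂ hw₂ h1 h2 h12 hn1 hn2
              obtain ⟨h3, hsub⟩ := hkey u' hu'
              have hsub2 : G₀.neighborFinset u' ∩ G₀.neighborFinset v ⊆
                  ((G₀.neighborFinset v).erase u') \ {w₁, w₂} := by
                intro z hz
                refine Finset.mem_sdiff.mpr ⟨hsub hz, ?_⟩
                intro hzmem
                have hadj : G₀.Adj u' z :=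
                  (hmN _ _).mp (Finset.mem_inter.mp hz).1
                rcases Finset.mem_insert.mp hzmem with rfl | hz2
                · exact hn1 hadj
                · rw [Finset.mem_singleton] at hz2
                  exact hn2 (hz2 ▸ hadj)
              have hcard2 : (((G₀.neighborFinset v).erase u') \ {w₁, w₂}).card ≤ 2 := by
                have herase : ((G₀.neighborFinset v).erase u').card = 4 := by
                  rw [Finset.card_erase_of_mem hu']
                  unfold SimpleGraph.degree at hdeg
                  omega
                have hpair : ({w₁, w₂} : Finset V).card = 2 := Finset.card_pair h12
                have hsub3 : ({w₁, w₂} : Finset V) ⊆ (G₀.neighborFinset v).erase u' := by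
                  intro z hz
                  rcases Finset.mem_insert.mp hz with rfl | hz2
                  · exact Finset.mem_erase.mpr ⟨h1, hw₁⟩
                  · rw [Finset.mem_singleton] at hz2
                    exact hz2 ▸ Finset.mem_erase.mpr ⟨h2, hw₂⟩
                rw [Finset.card_sdiff_of_subset hsub3, herase, hpair]
              have := Finset.card_le_card hsub2
              omega
            by_cases hcomp : ∀ a ∈ G₀.neighborFinset v, ∀ b ∈ G₀.neighborFinset v,
                a ≠ b → G₀.Adj a b
            · refine clique5_minor (G₀.neighborFinset v) ?_ hcomp
              unfold SimpleGraph.degree at hdeg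
              omega
            · push_neg at hcomp
              obtain ⟨a, ha, b, hb, hne_ab, hnadj⟩ := hcomp
              set R := ((G₀.neighborFinset v).erase a).erase b with hR
              have hRcard : R.card = 3 := by
                rw [hR, Finset.card_erase_of_mem, Finset.card_erase_of_mem ha]
                · unfold SimpleGraph.degree at hdeg
                  omega
                · exact Finset.mem_erase.mpr ⟨hne_ab.symm, hb⟩
              obtain ⟨p, q, r, hpq, hpr, hqr, hRdef⟩ := Finset.card_eq_three.mp hRcard
              have hmem : ∀ z ∈ R, z ∈ G₀.neighborFinset v ∧ z ≠ a ∧ z ≠ b := by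
                intro z hz
                rw [hR] at hz
                have h1 := Finset.mem_of_mem_erase hz
                exact ⟨Finset.mem_of_mem_erase h1, Finset.ne_of_mem_erase h1,
                  Finset.ne_of_mem_erase hz⟩
              have hp : p ∈ R := by rw [hRdef]; simp
              have hq : q ∈ R := by rw [hRdef]; simp
              have hr : r ∈ R := by rw [hRdef]; simp
              obtain ⟨hpN, hpa, hpb⟩ := hmem p hp
              obtain ⟨hqN, hqa, hqb⟩ := hmem q hq
              obtain ⟨hrN, hra, hrb⟩ := hmem r hr
              -- a and b are adjacent to everything in R
              have hadjA : ∀ z ∈ R, G₀.Adj a z := by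
                intro z hz
                obtain ⟨hzN, hza, hzb⟩ := hmem z hz
                by_contra hcon
                exact atMostOne a ha b hb z hzN hne_ab.symm hza hzb.symm hnadj hcon
              have hadjB : ∀ z ∈ R, G₀.Adj b z := by
                intro z hz
                obtain ⟨hzN, hza, hzb⟩ := hmem z hz
                by_contra hcon
                exact atMostOne b hb a ha z hzN hne_ab hzb hza.symm
                  (fun h => hnadj h.symm) hcon
              have hvadj : ∀ z ∈ G₀.neighborFinset v, G₀.Adj v z :=
                fun z hz => (hmN _ _).mp hz
              by_cases hqradj : G₀.Adj q r
              · exact k5_minor_of_config (hvadj a ha) (hvadj b hb) (hvadj p hpN)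
                  (hvadj q hqN) (hvadj r hrN) (hadjA p hp) ((hadjB p hp).symm)
                  (hadjA q hq) (hadjA r hr) (hadjB q hq) (hadjB r hr) hqradj
                  hne_ab hpq hpr
              · have hpradj : G₀.Adj p r := by
                  by_contra hcon
                  exact atMostOne r hrN q hqN p hpN hqr hpr hpq.symm
                    (fun h => hqradj h.symm) (fun h => hcon h.symm)
                exact k5_minor_of_config (hvadj a ha) (hvadj b hb) (hvadj q hqN)
                  (hvadj p hpN) (hvadj r hrN) (hadjA q hq) ((hadjB q hq).symm)
                  (hadjA p hp) (hadjA r hr) (hadjB p hp) (hadjB r hr) hpradj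
                  hne_ab hpq.symm hqr

end Mader3

section MaderBound

lemma mader_bound {V : Type} [Fintype V] [DecidableEq V] (G : SimpleGraph V)
    [DecidableRel G.Adj] (h5 : ¬ HasMinor G (completeGraph (Fin 5)))
    (h3 : 3 ≤ Fintype.card V) :
    G.edgeFinset.card ≤ 3 * Fintype.card V - 6 := by
  by_cases hbig : 5 ≤ Fintype.card V
  · by_contra hcon
    push_neg at hcon
    refine h5 (mader_core (Fintype.card V) V G rfl hbig ?_)
    rw [Set.ncard_eq_toFinset_card']
    have : G.edgeSet.toFinset = G.edgeFinset := rfl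
    rw [this]
    omega
  · have hle := SimpleGraph.card_edgeFinset_le_card_choose_two (G := G)
    push_neg at hbig
    set n := Fintype.card V with hn
    interval_cases n
    · have : Nat.choose 3 2 = 3 := by decide
      omega
    · have : Nat.choose 4 2 = 6 := by decide
      omega

end MaderBound

section Spectral

lemma herm_quad_le {V : Type*} [Fintype V] [DecidableEq V] [Nonempty V]
    (A : Matrix V V ℝ) (hA : A.IsHermitian) (x : V → ℝ) :
    x ⬝ᵥ (A *ᵥ x) ≤ (⨆ i, hA.eigenvalues i) * (x ⬝ᵥ x) := by
  set μ := ⨆ i, hA.eigenvalues i with hμ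
  have hbdd : BddAbove (Set.range hA.eigenvalues) := Set.finite_range _ |>.bddAbove
  have hμle : ∀ i, hA.eigenvalues i ≤ μ := fun i => le_ciSup hbdd i
  set U : Matrix V V ℝ := (hA.eigenvectorUnitary : Matrix V V ℝ) with hU
  have hstar : star U = Uᵀ := by
    rw [Matrix.star_eq_conjTranspose, Matrix.conjTranspose_eq_transpose_of_trivial]
  have hunit : U * star U = 1 := Matrix.mem_unitaryGroup_iff.mp hA.eigenvectorUnitary.2
  set y := Uᵀ *ᵥ x with hy
  have hxU : ∀ z : V → ℝ, x ⬝ᵥ (U *ᵥ z) = y ⬝ᵥ z := by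
    intro z
    rw [Matrix.dotProduct_mulVec, hy, ← Matrix.vecMul_transpose]
    rw [Matrix.transpose_transpose]
  have hyy : y ⬝ᵥ y = x ⬝ᵥ x := by
    rw [← hxU y]
    show x ⬝ᵥ (U *ᵥ (Uᵀ *ᵥ x)) = x ⬝ᵥ x
    rw [Matrix.mulVec_mulVec, ← hstar, hunit, Matrix.one_mulVec]
  have hspec : A = U * Matrix.diagonal (RCLike.ofReal ∘ hA.eigenvalues) * star U :=
    hA.spectral_theorem
  have hAx : x ⬝ᵥ (A *ᵥ x) = ∑ i, hA.eigenvalues i * (y i * y i) := by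
    conv_lhs => rw [hspec]
    rw [← Matrix.mulVec_mulVec, ← Matrix.mulVec_mulVec, hxU, hstar]
    rw [dotProduct]
    refine Finset.sum_congr rfl fun i _ => ?_
    rw [Matrix.mulVec_diagonal]
    simp only [Function.comp_apply, RCLike.ofReal_real_eq_id, id_eq]
    ring
  rw [hAx, ← hyy, dotProduct, Finset.mul_sum]
  refine Finset.sum_le_sum fun i _ => ?_
  have hsq : 0 ≤ y i * y i := mul_self_nonneg _
  exact mul_le_mul_of_nonneg_right (hμle i) hsq

end Spectral

section HubGraph

/-- The graph on `Fin n` where vertices `0` and `1` are joined to everything. -/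
def hubGraph (n : ℕ) : SimpleGraph (Fin n) where
  Adj i j := i ≠ j ∧ ((i : ℕ) < 2 ∨ (j : ℕ) < 2)
  symm := ⟨fun i j h => ⟨h.1.symm, h.2.symm⟩⟩
  loopless := ⟨fun i h => h.1 rfl⟩

lemma hubGraph_hubfree3 {n : ℕ} {β : Type*} (f : β → Set (Fin n))
    (hne : ∀ w, (f w).Nonempty)
    (hdisj : Pairwise fun w₁ w₂ => Disjoint (f w₁) (f w₂))
    (w₁ w₂ w₃ : β) (h12 : w₁ ≠ w₂) (h13 : w₁ ≠ w₃) (h23 : w₂ ≠ w₃) :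
    (∀ i ∈ f w₁, 2 ≤ (i : ℕ)) ∨ (∀ i ∈ f w₂, 2 ≤ (i : ℕ)) ∨ (∀ i ∈ f w₃, 2 ≤ (i : ℕ)) := by
  by_contra hcon
  push_neg at hcon
  obtain ⟨⟨i₁, hi₁, hl₁⟩, ⟨i₂, hi₂, hl₂⟩, ⟨i₃, hi₃, hl₃⟩⟩ := hcon
  have d12 : i₁ ≠ i₂ := fun h => Set.disjoint_left.mp (hdisj h12) hi₁ (h ▸ hi₂)
  have d13 : i₁ ≠ i₃ := fun h => Set.disjoint_left.mp (hdisj h13) hi₁ (h ▸ hi₃)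
  have d23 : i₂ ≠ i₃ := fun h => Set.disjoint_left.mp (hdisj h23) hi₂ (h ▸ hi₃)
  have v12 : (i₁ : ℕ) ≠ (i₂ : ℕ) := fun h => d12 (Fin.ext h)
  have v13 : (i₁ : ℕ) ≠ (i₃ : ℕ) := fun h => d13 (Fin.ext h)
  have v23 : (i₂ : ℕ) ≠ (i₃ : ℕ) := fun h => d23 (Fin.ext h)
  omega

lemma hubGraph_planar (n : ℕ) : IsPlanar (hubGraph n) := by
  constructor
  · rintro ⟨f, hne, hconn, hdisj, hadj⟩
    -- find two distinct hub-free branch sets among the five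
    have key := hubGraph_hubfree3 f hne hdisj (0 : Fin 5) 1 2 (by decide) (by decide) (by decide)
    have contra : ∀ wa wb : Fin 5, wa ≠ wb → (∀ i ∈ f wa, 2 ≤ (i : ℕ)) →
        (∀ i ∈ f wb, 2 ≤ (i : ℕ)) → False := by
      intro wa wb hab ha hb
      obtain ⟨u, hu, v, hv, huv⟩ := hadj wa wb hab
      rcases huv.2 with h | h
      · exact absurd h (by have := ha u hu; omega)
      · exact absurd h (by have := hb v hv; omega)
    rcases key with h1 | h1 | h1
    · rcases hubGraph_hubfree3 f hne hdisj (1 : Fin 5) 2 3 (by decide) (by decide) (by decide)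
        with h2 | h2 | h2
      · exact contra 0 1 (by decide) h1 h2
      · exact contra 0 2 (by decide) h1 h2
      · exact contra 0 3 (by decide) h1 h2
    · rcases hubGraph_hubfree3 f hne hdisj (0 : Fin 5) 2 3 (by decide) (by decide) (by decide)
        with h2 | h2 | h2
      · exact contra 1 0 (by decide) h1 h2
      · exact contra 1 2 (by decide) h1 h2
      · exact contra 1 3 (by decide) h1 h2
    · rcases hubGraph_hubfree3 f hne hdisj (0 : Fin 5) 1 3 (by decide) (by decide) (by decide)
        with h2 | h2 | h2
      · exact contra 2 0 (by decide) h1 h2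
      · exact contra 2 1 (by decide) h1 h2
      · exact contra 2 3 (by decide) h1 h2
  · rintro ⟨f, hne, hconn, hdisj, hadj⟩
    have keyL := hubGraph_hubfree3 f hne hdisj (Sum.inl 0 : Fin 3 ⊕ Fin 3) (Sum.inl 1)
      (Sum.inl 2) (by decide) (by decide) (by decide)
    have keyR := hubGraph_hubfree3 f hne hdisj (Sum.inr 0 : Fin 3 ⊕ Fin 3) (Sum.inr 1)
      (Sum.inr 2) (by decide) (by decide) (by decide)
    have contra : ∀ (i j : Fin 3), (∀ z ∈ f (Sum.inl i), 2 ≤ (z : ℕ)) →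
        (∀ z ∈ f (Sum.inr j), 2 ≤ (z : ℕ)) → False := by
      intro i j hi hj
      obtain ⟨u, hu, v, hv, huv⟩ := hadj (Sum.inl i) (Sum.inr j) (by simp)
      rcases huv.2 with h | h
      · exact absurd h (by have := hi u hu; omega)
      · exact absurd h (by have := hj v hv; omega)
    rcases keyL with h1 | h1 | h1 <;> rcases keyR with h2 | h2 | h2 <;>
      first
      | exact contra 0 0 h1 h2 | exact contra 0 1 h1 h2 | exact contra 0 2 h1 h2
      | exact contra 1 0 h1 h2 | exact contra 1 1 h1 h2 | exact contra 1 2 h1 h2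
      | exact contra 2 0 h1 h2 | exact contra 2 1 h1 h2 | exact contra 2 2 h1 h2

end HubGraph

section Rayleigh

lemma rayleigh_le_specRad {V : Type*} [Fintype V] [DecidableEq V] [Nonempty V]
    (G : SimpleGraph V) [inst : DecidableRel G.Adj] (x : V → ℝ) (c : ℝ)
    (hxx : 0 < x ⬝ᵥ x) (h : c * (x ⬝ᵥ x) ≤ x ⬝ᵥ (G.adjMatrix ℝ *ᵥ x)) :
    c ≤ specRad G := by
  letI instc := Classical.decRel G.Adj
  rw [Subsingleton.elim inst instc] at h
  have hq := herm_quad_le _ (adjMatrix_isHermitian G) x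
  have hdef : specRad G = ⨆ i, (adjMatrix_isHermitian G).eigenvalues i := rfl
  rw [← hdef] at hq
  exact le_of_mul_le_mul_right (h.trans hq) hxx

lemma hubGraph_specRad {n : ℕ} (hn : 3 ≤ n) :
    Real.sqrt (2 * (n : ℝ) - 4) ≤ specRad (hubGraph n) := by
  classical
  haveI : Nonempty (Fin n) := ⟨⟨0, by omega⟩⟩
  letI : DecidableRel (hubGraph n).Adj := Classical.decRel _
  set t : ℝ := (n : ℝ) - 2 with hand
  have ht : 1 ≤ t := by
    have : (3 : ℝ) ≤ (n : ℝ) := by exact_mod_cast hn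
    simp [hand]; linarith
  set a : ℝ := Real.sqrt (t / 2) with ha
  have ha0 : 0 ≤ a := Real.sqrt_nonneg _
  have ha2 : a ^ 2 = t / 2 := Real.sq_sqrt (by linarith)
  set x : Fin n → ℝ := fun i => if (i : ℕ) < 2 then a else 1 with hx
  have hAdj : ∀ i j, (hubGraph n).Adj i j ↔ (i ≠ j ∧ ((i:ℕ) < 2 ∨ (j:ℕ) < 2)) :=
    fun i j => Iff.rfl
  set S2 : Finset (Fin n) := Finset.univ.filter (fun i : Fin n => (i : ℕ) < 2) with hS2
  have h0n : 0 < n := by omega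
  have h1n : 1 < n := by omega
  have hS2eq : S2 = {(⟨0, h0n⟩ : Fin n), ⟨1, h1n⟩} := by
    ext i
    simp only [hS2, Finset.mem_filter, Finset.mem_univ, true_and, Finset.mem_insert,
      Finset.mem_singleton, Fin.ext_iff]
    omega
  have hS2card : S2.card = 2 := by
    rw [hS2eq]
    rw [Finset.card_insert_of_notMem (by simp [Fin.ext_iff]), Finset.card_singleton]
  have hcompcard : (Finset.univ.filter (fun i : Fin n => ¬ (i : ℕ) < 2)).card = n - 2 := by
    have := Finset.card_filter_add_card_filter_not (s := (Finset.univ : Finset (Fin n)))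
      (p := fun i : Fin n => (i : ℕ) < 2)
    rw [Finset.card_univ, Fintype.card_fin] at this
    rw [← hS2] at this
    omega
  have hcastn2 : ((n - 2 : ℕ) : ℝ) = t := by
    rw [hand]
    have : (2 : ℕ) ≤ n := by omega
    push_cast [this]
    ring
  have hsum : ∑ j, x j = 2 * a + t := by
    rw [hx]
    rw [Finset.sum_ite]
    rw [Finset.sum_const, Finset.sum_const, ← hS2, hS2card, hcompcard]
    rw [nsmul_eq_mul, nsmul_eq_mul, hcastn2]
    push_cast
    ring
  have hmul : ∀ i, ((hubGraph n).adjMatrix ℝ *ᵥ x) i =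
      if (i : ℕ) < 2 then (2 * a + t) - x i else 2 * a := by
    intro i
    rw [SimpleGraph.adjMatrix_mulVec_apply]
    by_cases hi : (i : ℕ) < 2
    · rw [if_pos hi]
      have hnbr : (hubGraph n).neighborFinset i = Finset.univ.erase i := by
        ext j
        rw [SimpleGraph.mem_neighborFinset, hAdj, Finset.mem_erase]
        constructor
        · rintro ⟨h1, -⟩; exact ⟨fun hc => h1 hc.symm, Finset.mem_univ _⟩
        · rintro ⟨h1, -⟩; exact ⟨fun hc => h1 hc.symm, Or.inl hi⟩
      rw [hnbr, Finset.sum_erase_eq_sub (Finset.mem_univ i), hsum]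
    · rw [if_neg hi]
      have hnbr : (hubGraph n).neighborFinset i = S2 := by
        ext j
        rw [SimpleGraph.mem_neighborFinset, hAdj, hS2, Finset.mem_filter]
        constructor
        · rintro ⟨h1, h2 | h2⟩
          · exact absurd h2 hi
          · exact ⟨Finset.mem_univ _, h2⟩
        · rintro ⟨-, h2⟩
          refine ⟨fun hc => hi ?_, Or.inr h2⟩
          rw [hc]; exact h2
      rw [hnbr]
      have : ∀ j ∈ S2, x j = a := by
        intro j hj
        rw [hS2, Finset.mem_filter] at hj
        rw [hx]
        exact if_pos hj.2
      rw [Finset.sum_congr rfl this, Finset.sum_const, hS2card, nsmul_eq_mul]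
      push_cast
      ring
  have hxAx : x ⬝ᵥ ((hubGraph n).adjMatrix ℝ *ᵥ x) = 2 * (a * (a + t)) + t * (2 * a) := by
    unfold dotProduct
    have hterm : ∀ i, x i * ((hubGraph n).adjMatrix ℝ *ᵥ x) i =
        if (i : ℕ) < 2 then a * (a + t) else 2 * a := by
      intro i
      rw [hmul i]
      by_cases hi : (i : ℕ) < 2
      · rw [if_pos hi, if_pos hi]
        have hxa : x i = a := by rw [hx]; exact if_pos hi
        rw [hxa]
        ring
      · rw [if_neg hi, if_neg hi]
        have hxa : x i = 1 := by rw [hx]; exact if_neg hi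
        rw [hxa]
        ring
    rw [Finset.sum_congr rfl (fun i _ => hterm i)]
    rw [Finset.sum_ite, Finset.sum_const, Finset.sum_const, ← hS2, hS2card, hcompcard]
    rw [nsmul_eq_mul, nsmul_eq_mul, hcastn2]
    push_cast
    ring
  have hxx : x ⬝ᵥ x = 2 * (a * a) + t := by
    unfold dotProduct
    have hterm : ∀ i, x i * x i = if (i : ℕ) < 2 then a * a else 1 := by
      intro i
      by_cases hi : (i : ℕ) < 2
      · rw [if_pos hi]
        have hxa : x i = a := by rw [hx]; exact if_pos hi
        rw [hxa]
      · rw [if_neg hi]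
        have hxa : x i = 1 := by rw [hx]; exact if_neg hi
        rw [hxa]; ring
    rw [Finset.sum_congr rfl (fun i _ => hterm i)]
    rw [Finset.sum_ite, Finset.sum_const, Finset.sum_const, ← hS2, hS2card, hcompcard]
    rw [nsmul_eq_mul, nsmul_eq_mul, hcastn2]
    push_cast
    ring
  have hsqrt : Real.sqrt (2 * (n : ℝ) - 4) = 2 * a := by
    have h2a : 2 * (n : ℝ) - 4 = (2 * a) ^ 2 := by
      rw [mul_pow, ha2, hand]
      ring
    rw [h2a, Real.sqrt_sq (by linarith)]
  have hxxpos : 0 < x ⬝ᵥ x := by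
    rw [hxx]
    nlinarith
  refine rayleigh_le_specRad (hubGraph n) x _ hxxpos ?_
  rw [hsqrt, hxx, hxAx]
  nlinarith

end Rayleigh

/-- For a spectral-extremal planar graph `G` on `n` vertices with Perron vector `v`
normalized to max-norm `1`, the set `{z : v z > ε}` has at most `3√(2n-4)/ε` elements. -/
theorem extremal_planar_large_entries_few (n : ℕ) (hn : 3 ≤ n)
    (G : SimpleGraph (Fin n)) [DecidableRel G.Adj] (hG : IsPlanar G)
    (hmax : ∀ H : SimpleGraph (Fin n), IsPlanar H → specRad H ≤ specRad G)
    (v : Fin n → ℝ) (hpos : ∀ i, 0 < v i)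
    (heig : G.adjMatrix ℝ *ᵥ v = specRad G • v)
    (hle : ∀ i, v i ≤ 1) (hone : ∃ i, v i = 1)
    (ε : ℝ) (hε : 0 < ε) :
    (({z : Fin n | ε < v z}.ncard : ℝ)) ≤ 3 * Real.sqrt (2 * (n : ℝ) - 4) / ε := by
  classical
  have hlam0 : Real.sqrt (2 * (n : ℝ) - 4) ≤ specRad G :=
    (hubGraph_specRad hn).trans (hmax _ (hubGraph_planar n))
  set lam := specRad G with hlam
  have hn3 : (3 : ℝ) ≤ (n : ℝ) := by exact_mod_cast hn
  set r := Real.sqrt (2 * (n : ℝ) - 4) with hr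
  have hr0 : 0 < r := Real.sqrt_pos.mpr (by linarith)
  have hr2 : r ^ 2 = 2 * (n : ℝ) - 4 := Real.sq_sqrt (by linarith)
  have hlampos : 0 < lam := lt_of_lt_of_le hr0 hlam0
  set L : Finset (Fin n) := Finset.univ.filter (fun z => ε < v z) with hL
  have hncard : ({z : Fin n | ε < v z}).ncard = L.card := by
    rw [Set.ncard_eq_toFinset_card']
    congr 1
    ext z
    simp [hL]
  have hdeg : ∀ z ∈ L, ε * lam ≤ (G.degree z : ℝ) := by
    intro z hz
    rw [hL, Finset.mem_filter] at hz
    have h1 : ((G.adjMatrix ℝ) *ᵥ v) z = lam * v z := by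
      rw [heig]
      rfl
    have h2 : ((G.adjMatrix ℝ) *ᵥ v) z ≤ (G.degree z : ℝ) := by
      rw [SimpleGraph.adjMatrix_mulVec_apply]
      calc ∑ w ∈ G.neighborFinset z, v w ≤ ∑ w ∈ G.neighborFinset z, 1 :=
            Finset.sum_le_sum (fun w _ => hle w)
        _ = (G.degree z : ℝ) := by
            rw [Finset.sum_const, nsmul_eq_mul, mul_one, SimpleGraph.degree]
    calc ε * lam ≤ v z * lam := mul_le_mul_of_nonneg_right (le_of_lt hz.2) (le_of_lt hlampos)
      _ = lam * v z := mul_comm _ _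
      _ = ((G.adjMatrix ℝ) *ᵥ v) z := h1.symm
      _ ≤ _ := h2
  have hsumL : (L.card : ℝ) * (ε * lam) ≤ ∑ z ∈ L, (G.degree z : ℝ) := by
    calc (L.card : ℝ) * (ε * lam) = ∑ _z ∈ L, (ε * lam) := by
          rw [Finset.sum_const, nsmul_eq_mul]
      _ ≤ _ := Finset.sum_le_sum hdeg
  have hsumall : ∑ z ∈ L, (G.degree z : ℝ) ≤ ∑ z, (G.degree z : ℝ) :=
    Finset.sum_le_sum_of_subset_of_nonneg (Finset.subset_univ L)
      (fun i _ _ => by positivity)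
  have hedges : G.edgeFinset.card ≤ 3 * n - 6 := by
    have hb := mader_bound G hG.1 (by rw [Fintype.card_fin]; exact hn)
    rwa [Fintype.card_fin] at hb
  have hsum2 : ∑ z, (G.degree z : ℝ) = 2 * (G.edgeFinset.card : ℝ) := by
    rw [← Nat.cast_sum, SimpleGraph.sum_degrees_eq_twice_card_edges]
    push_cast
    ring
  have hcast : ((3 * n - 6 : ℕ) : ℝ) = 3 * (n : ℝ) - 6 := by
    have h6 : 6 ≤ 3 * n := by omega
    push_cast [h6]
    ring
  have hBIG : (L.card : ℝ) * (ε * lam) ≤ 3 * r ^ 2 := by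
    have hcc : (G.edgeFinset.card : ℝ) ≤ 3 * (n : ℝ) - 6 := by
      rw [← hcast]
      exact_mod_cast hedges
    calc (L.card : ℝ) * (ε * lam) ≤ ∑ z ∈ L, (G.degree z : ℝ) := hsumL
      _ ≤ ∑ z, (G.degree z : ℝ) := hsumall
      _ = 2 * (G.edgeFinset.card : ℝ) := hsum2
      _ ≤ 2 * (3 * (n : ℝ) - 6) := by linarith
      _ = 3 * (2 * (n : ℝ) - 4) := by ring
      _ = 3 * r ^ 2 := by rw [hr2]
  rw [hncard, le_div_iff₀ hε]
  refine le_of_mul_le_mul_right ?_ hr0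
  have h1 : (L.card : ℝ) * ε * r ≤ (L.card : ℝ) * ε * lam := by
    apply mul_le_mul_of_nonneg_left hlam0
    positivity
  calc (L.card : ℝ) * ε * r ≤ (L.card : ℝ) * ε * lam := h1
    _ = (L.card : ℝ) * (ε * lam) := by ring
    _ ≤ 3 * r ^ 2 := hBIG
    _ = 3 * r * r := by ring
end
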